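/- arXiv:1701.04582 — 9 statements merged into one kernel-verified Lean document; each statement's English description precedes it below -/
import Mathlib

section
/- Let A be any bivariate copula and let μ be a probability measure on [0,1]² whose distribution function is A, i.e. μ([0,u]×[0,v]) = A(u,v) for all u,v ∈ [0,1]. Then [M,A] > [Π,A], i.e. ∫_{[0,1]²} min(u,v) dμ(u,v) > ∫_{[0,1]²} u·v dμ(u,v). -/
open MeasureTheory Set

/-- A bivariate copula on [0,1]², encoded as a function `ℝ → ℝ → ℝ` whose
defining properties are required on the unit square. -/
def IsCopula (C : ℝ → ℝ → ℝ) : Prop :=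
  (∀ u ∈ Icc (0:ℝ) 1, C u 0 = 0) ∧
  (∀ v ∈ Icc (0:ℝ) 1, C 0 v = 0) ∧
  (∀ u ∈ Icc (0:ℝ) 1, C u 1 = u) ∧
  (∀ v ∈ Icc (0:ℝ) 1, C 1 v = v) ∧
  (∀ u₁ u₂ v₁ v₂ : ℝ, u₁ ∈ Icc (0:ℝ) 1 → u₂ ∈ Icc (0:ℝ) 1 → v₁ ∈ Icc (0:ℝ) 1 →
    v₂ ∈ Icc (0:ℝ) 1 → u₁ ≤ u₂ → v₁ ≤ v₂ →
    0 ≤ C u₂ v₂ - C u₂ v₁ - C u₁ v₂ + C u₁ v₁) ∧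
  (∀ u ∈ Icc (0:ℝ) 1, ∀ v ∈ Icc (0:ℝ) 1, C u v ∈ Icc (0:ℝ) 1)

/-- Γ-invariance of a bivariate copula: invariance under the transposition and
the partial reflection ν₁. -/
def IsGammaInvariant (C : ℝ → ℝ → ℝ) : Prop :=
  ∀ u ∈ Icc (0:ℝ) 1, ∀ v ∈ Icc (0:ℝ) 1,
    C u v = C v u ∧ C u v = v - C (1 - u) v

/-- The unit square in ℝ². -/
def unitSquare : Set (ℝ × ℝ) := Icc (0:ℝ) 1 ×ˢ Icc (0:ℝ) 1

/-- `μ` is a measure on [0,1]² whose distribution function is `A`. -/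
def IsDistributionOf (μ : Measure (ℝ × ℝ)) (A : ℝ → ℝ → ℝ) : Prop :=
  ∀ u ∈ Icc (0:ℝ) 1, ∀ v ∈ Icc (0:ℝ) 1,
    μ (Icc (0:ℝ) u ×ˢ Icc (0:ℝ) v) = ENNReal.ofReal (A u v)

/-- The biconvex form `[C, A]` where `μ` is the measure associated with `A`. -/
noncomputable def biForm (μ : Measure (ℝ × ℝ)) (C : ℝ → ℝ → ℝ) : ℝ :=
  ∫ p in unitSquare, C p.1 p.2 ∂μ

/-!
Write `min u v - u v = min u v * (1 - max u v)`: it is nonnegative on the unit square and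
positive on its interior. The copula measure gives no mass to the edges `{0} × [0,1]` and
`[0,1] × {0}`, so `μ ((0,t] × (0,t]) = A t t ≥ 2t - 1` by the Fréchet–Hoeffding lower bound;
with `t = 3/4` the integrand is positive on a set of positive measure.
-/

lemma min_sub_mul_nonneg {u v : ℝ} (hu : u ∈ Icc (0:ℝ) 1) (hv : v ∈ Icc (0:ℝ) 1) :
    0 ≤ min u v - u * v := by
  obtain ⟨hu0, hu1⟩ := hu
  obtain ⟨hv0, hv1⟩ := hv
  rcases le_total u v with h | h
  · rw [min_eq_left h]; nlinarith
  · rw [min_eq_right h]; nlinarith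

lemma min_sub_mul_pos {u v : ℝ} (hu : u ∈ Ioo (0:ℝ) 1) (hv : v ∈ Ioo (0:ℝ) 1) :
    0 < min u v - u * v := by
  obtain ⟨hu0, hu1⟩ := hu
  obtain ⟨hv0, hv1⟩ := hv
  rcases le_total u v with h | h
  · rw [min_eq_left h]; nlinarith
  · rw [min_eq_right h]; nlinarith

lemma measurableSet_unitSquare : MeasurableSet unitSquare :=
  measurableSet_Icc.prod measurableSet_Icc

lemma Continuous.integrableOn_unitSquare {f : ℝ × ℝ → ℝ} (hf : Continuous f)
    {μ : Measure (ℝ × ℝ)} (hμ : μ unitSquare ≠ ⊤) : IntegrableOn f unitSquare μ :=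
  hf.continuousOn.integrableOn_of_subset_isCompact (isCompact_Icc.prod isCompact_Icc)
    measurableSet_unitSquare subset_rfl hμ

lemma IsCopula.add_sub_one_le {C : ℝ → ℝ → ℝ} (hC : IsCopula C) {u v : ℝ}
    (hu : u ∈ Icc (0:ℝ) 1) (hv : v ∈ Icc (0:ℝ) 1) : u + v - 1 ≤ C u v := by
  obtain ⟨-, -, hC1, h1C, hvol, -⟩ := hC
  have h1 : (1:ℝ) ∈ Icc (0:ℝ) 1 := right_mem_Icc.2 zero_le_one
  have := hvol u 1 v 1 hu h1 hv h1 hu.2 hv.2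
  rw [hC1 1 h1, h1C v hv, hC1 u hu] at this
  linarith

namespace IsDistributionOf

variable {μ : Measure (ℝ × ℝ)} {A : ℝ → ℝ → ℝ}

lemma measure_unitSquare (hdist : IsDistributionOf μ A) (hA : IsCopula A) :
    μ unitSquare = 1 := by
  have h1 : (1:ℝ) ∈ Icc (0:ℝ) 1 := right_mem_Icc.2 zero_le_one
  rw [unitSquare, hdist 1 h1 1 h1, hA.2.2.1 1 h1, ENNReal.ofReal_one]

lemma measure_Ioc_prod_Ioc (hdist : IsDistributionOf μ A) (hA : IsCopula A) {u v : ℝ}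
    (hu : u ∈ Icc (0:ℝ) 1) (hv : v ∈ Icc (0:ℝ) 1) :
    μ (Ioc (0:ℝ) u ×ˢ Ioc (0:ℝ) v) = ENNReal.ofReal (A u v) := by
  have h0 : (0:ℝ) ∈ Icc (0:ℝ) 1 := left_mem_Icc.2 zero_le_one
  have h1 : (1:ℝ) ∈ Icc (0:ℝ) 1 := right_mem_Icc.2 zero_le_one
  have hleft : μ (Icc (0:ℝ) 0 ×ˢ Icc (0:ℝ) 1) = 0 := by
    rw [hdist 0 h0 1 h1, hA.2.1 1 h1, ENNReal.ofReal_zero]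
  have hbottom : μ (Icc (0:ℝ) 1 ×ˢ Icc (0:ℝ) 0) = 0 := by
    rw [hdist 1 h1 0 h0, hA.1 1 h1, ENNReal.ofReal_zero]
  have hcover : Icc (0:ℝ) u ×ˢ Icc (0:ℝ) v ⊆
      Ioc (0:ℝ) u ×ˢ Ioc (0:ℝ) v ∪ Icc (0:ℝ) 0 ×ˢ Icc (0:ℝ) 1 ∪ Icc (0:ℝ) 1 ×ˢ Icc (0:ℝ) 0 := by
    rintro ⟨x, y⟩ ⟨⟨hx0, hxu⟩, hy0, hyv⟩
    rcases hx0.eq_or_lt with rfl | hx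
    · exact Or.inl (Or.inr ⟨⟨le_rfl, le_rfl⟩, hy0, hyv.trans hv.2⟩)
    rcases hy0.eq_or_lt with rfl | hy
    · exact Or.inr ⟨⟨hx0, hxu.trans hu.2⟩, le_rfl, le_rfl⟩
    exact Or.inl (Or.inl ⟨⟨hx, hxu⟩, hy, hyv⟩)
  refine le_antisymm ?_ ?_
  · rw [← hdist u hu v hv]
    exact measure_mono (prod_mono Ioc_subset_Icc_self Ioc_subset_Icc_self)
  · calc ENNReal.ofReal (A u v) = μ (Icc (0:ℝ) u ×ˢ Icc (0:ℝ) v) := (hdist u hu v hv).symm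
      _ ≤ μ (Ioc (0:ℝ) u ×ˢ Ioc (0:ℝ) v ∪ Icc (0:ℝ) 0 ×ˢ Icc (0:ℝ) 1) +
          μ (Icc (0:ℝ) 1 ×ˢ Icc (0:ℝ) 0) := (measure_mono hcover).trans (measure_union_le _ _)
      _ ≤ μ (Ioc (0:ℝ) u ×ˢ Ioc (0:ℝ) v) + μ (Icc (0:ℝ) 0 ×ˢ Icc (0:ℝ) 1) +
          μ (Icc (0:ℝ) 1 ×ˢ Icc (0:ℝ) 0) := by gcongr; exact measure_union_le _ _
      _ = μ (Ioc (0:ℝ) u ×ˢ Ioc (0:ℝ) v) := by rw [hleft, hbottom, add_zero, add_zero]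

lemma measure_interior_unitSquare_pos (hdist : IsDistributionOf μ A) (hA : IsCopula A) :
    0 < μ (Ioo (0:ℝ) 1 ×ˢ Ioo (0:ℝ) 1) := by
  have ht : (3/4 : ℝ) ∈ Icc (0:ℝ) 1 := ⟨by norm_num, by norm_num⟩
  have hdiag : (1/2 : ℝ) ≤ A (3/4) (3/4) := by linarith [hA.add_sub_one_le ht ht]
  calc (0 : ENNReal) < ENNReal.ofReal (A (3/4) (3/4)) := ENNReal.ofReal_pos.2 (by linarith)
    _ = μ (Ioc (0:ℝ) (3/4) ×ˢ Ioc (0:ℝ) (3/4)) := (hdist.measure_Ioc_prod_Ioc hA ht ht).symm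
    _ ≤ μ (Ioo (0:ℝ) 1 ×ˢ Ioo (0:ℝ) 1) := by
      have hsub : Ioc (0:ℝ) (3/4) ⊆ Ioo 0 1 := Ioc_subset_Ioo_right (by norm_num)
      exact measure_mono (prod_mono hsub hsub)

end IsDistributionOf

theorem stmt1_general (A : ℝ → ℝ → ℝ) (μ : MeasureTheory.Measure (ℝ × ℝ))
    (hA : IsCopula A)
    (hdist : IsDistributionOf μ A) :
    biForm μ (fun u v => min u v) > biForm μ (fun u v => u * v) := by
  have hfin : μ unitSquare ≠ ⊤ := by simp [hdist.measure_unitSquare hA]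
  have hmin : IntegrableOn (fun p : ℝ × ℝ => min p.1 p.2) unitSquare μ :=
    (continuous_fst.min continuous_snd).integrableOn_unitSquare hfin
  have hmul : IntegrableOn (fun p : ℝ × ℝ => p.1 * p.2) unitSquare μ :=
    (continuous_fst.mul continuous_snd).integrableOn_unitSquare hfin
  have hnonneg : 0 ≤ᵐ[μ.restrict unitSquare] fun p : ℝ × ℝ => min p.1 p.2 - p.1 * p.2 :=
    ae_restrict_of_forall_mem measurableSet_unitSquare fun p hp => min_sub_mul_nonneg hp.1 hp.2
  have hinterior : Ioo (0:ℝ) 1 ×ˢ Ioo (0:ℝ) 1 ⊆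
      Function.support (fun p : ℝ × ℝ => min p.1 p.2 - p.1 * p.2) ∩ unitSquare :=
    fun p hp => ⟨(min_sub_mul_pos hp.1 hp.2).ne',
      prod_mono Ioo_subset_Icc_self Ioo_subset_Icc_self hp⟩
  have hpos : 0 < ∫ p in unitSquare, (min p.1 p.2 - p.1 * p.2) ∂μ :=
    (setIntegral_pos_iff_support_of_nonneg_ae hnonneg (hmin.sub hmul)).2
      ((hdist.measure_interior_unitSquare_pos hA).trans_le (measure_mono hinterior))
  rw [integral_sub hmin hmul] at hpos
  exact sub_pos.1 hpos

theorem stmt1 (A : ℝ → ℝ → ℝ) (μ : MeasureTheory.Measure (ℝ × ℝ))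
    (hA : IsCopula A)
    (hμ : MeasureTheory.IsProbabilityMeasure μ) (hdist : IsDistributionOf μ A) :
    biForm μ (fun u v => min u v) > biForm μ (fun u v => u * v) :=
  stmt1_general A μ hA hdist
end

section
/- Let A be a Γ-invariant bivariate copula and let μ be a probability measure on [0,1]² whose distribution function is A. Define κ_A[C] := ([C,A] − 1/4)/([M,A] − 1/4) for every copula C, where [C,A] := ∫_{[0,1]²} C dμ (the denominator [M,A] − 1/4 is strictly positive). Then κ_A is a (bivariate) measure of concordance: (i) κ_A[M] = 1; (ii) κ_A[π(C)] = κ_A[C] for every copula C, where (π(C))(u,v) := C(v,u); (iii) κ_A[ν₁(C)] = −κ_A[C] for every copula C, where (ν₁(C))(u,v) := v − C(1−u,v). -/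
open MeasureTheory Set

/-!
Let `ν` be `μ` restricted to the unit square. Its rectangle masses are the values of `A`, so both
marginals of `ν` are uniform on `[0,1]`. Symmetry of `A` makes `ν` invariant under
`(u, v) ↦ (v, u)`, and `A(u, v) = v - A(1 - u, v)` makes it invariant under `(u, v) ↦ (1 - u, v)`
(vertical lines being `ν`-null). Hence `[π(C), A] = [C, A]` and
`[ν₁(C), A] = ∫ v dν - [C, A] = 1/2 - [C, A]`.

By the layer-cake formula, `[M, A] = ∫₀¹ ν((t,1]²) dt = ∫₀¹ (1 - 2t + A(t,t)) dt`. The integrand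
is at least `max(1 - 2t, 0)`, whose integral is `1/4`, and exceeds it at `t = 1/2`, where
Γ-invariance forces `A(1/2, 1/2) = 1/4`.
-/

noncomputable def clampUnit (x : ℝ) : ℝ := max 0 (min x 1)

lemma clampUnit_mem (x : ℝ) : clampUnit x ∈ Icc (0:ℝ) 1 :=
  ⟨le_max_left _ _, max_le zero_le_one (min_le_right _ _)⟩

lemma clampUnit_of_mem {x : ℝ} (hx : x ∈ Icc (0:ℝ) 1) : clampUnit x = x := by
  simp [clampUnit, min_eq_left hx.2, max_eq_right hx.1]

lemma clampUnit_of_neg {x : ℝ} (hx : x < 0) : clampUnit x = 0 := by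
  simp [clampUnit, min_eq_left (hx.trans zero_lt_one).le, max_eq_left hx.le]

lemma clampUnit_one_sub (x : ℝ) : clampUnit (1 - x) = 1 - clampUnit x := by
  simp only [clampUnit, max_def, min_def]
  split_ifs <;> linarith

lemma Iic_inter_Icc_zero_one_of_neg {a : ℝ} (ha : a < 0) : Iic a ∩ Icc (0:ℝ) 1 = ∅ := by
  ext x
  simp only [mem_inter_iff, mem_Iic, mem_Icc, mem_empty_iff_false, iff_false]
  rintro ⟨hxa, h0x, -⟩
  linarith

lemma Iic_inter_Icc_zero_one_of_nonneg {a : ℝ} (ha : 0 ≤ a) :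
    Iic a ∩ Icc (0:ℝ) 1 = Icc 0 (clampUnit a) := by
  ext x
  simp only [mem_inter_iff, mem_Iic, mem_Icc, clampUnit, max_eq_right (le_min ha zero_le_one),
    le_min_iff]
  tauto

lemma isCompact_unitSquare : IsCompact unitSquare := isCompact_Icc.prod isCompact_Icc

namespace IsCopula

variable {C : ℝ → ℝ → ℝ}

lemma nonneg (h : IsCopula C) {u v : ℝ} (hu : u ∈ Icc (0:ℝ) 1) (hv : v ∈ Icc (0:ℝ) 1) :
    0 ≤ C u v :=
  (h.2.2.2.2.2 u hu v hv).1

lemma add_sub_one_le_s2 (h : IsCopula C) {u v : ℝ} (hu : u ∈ Icc (0:ℝ) 1)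
    (hv : v ∈ Icc (0:ℝ) 1) : u + v - 1 ≤ C u v := by
  obtain ⟨-, -, hu1, h1v, hrect, -⟩ := h
  have h1 : (1:ℝ) ∈ Icc (0:ℝ) 1 := right_mem_Icc.2 zero_le_one
  have := hrect u 1 v 1 hu h1 hv h1 hu.2 hv.2
  rw [hu1 1 h1, h1v v hv, hu1 u hu] at this
  linarith

lemma le_add_abs_sub_fst (h : IsCopula C) {u u' v : ℝ} (hu : u ∈ Icc (0:ℝ) 1)
    (hu' : u' ∈ Icc (0:ℝ) 1) (hv : v ∈ Icc (0:ℝ) 1) : C u v ≤ C u' v + |u - u'| := by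
  obtain ⟨hu0, -, hu1, -, hrect, -⟩ := h
  rcases le_total u u' with huu' | hu'u
  · have := hrect u u' 0 v hu hu' (left_mem_Icc.2 zero_le_one) hv huu' hv.1
    rw [hu0 u hu, hu0 u' hu'] at this
    linarith [abs_nonneg (u - u')]
  · have := hrect u' u v 1 hu' hu hv (right_mem_Icc.2 zero_le_one) hu'u hv.2
    rw [hu1 u hu, hu1 u' hu'] at this
    linarith [le_abs_self (u - u')]

lemma le_add_abs_sub_snd (h : IsCopula C) {u v v' : ℝ} (hu : u ∈ Icc (0:ℝ) 1)
    (hv : v ∈ Icc (0:ℝ) 1) (hv' : v' ∈ Icc (0:ℝ) 1) : C u v ≤ C u v' + |v - v'| := by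
  obtain ⟨-, h0v, -, h1v, hrect, -⟩ := h
  rcases le_total v v' with hvv' | hv'v
  · have := hrect 0 u v v' (left_mem_Icc.2 zero_le_one) hu hv hv' hu.1 hvv'
    rw [h0v v hv, h0v v' hv'] at this
    linarith [abs_nonneg (v - v')]
  · have := hrect u 1 v' v hu (right_mem_Icc.2 zero_le_one) hv' hv hu.2 hv'v
    rw [h1v v hv, h1v v' hv'] at this
    linarith [le_abs_self (v - v')]

lemma continuousOn (h : IsCopula C) :
    ContinuousOn (fun p : ℝ × ℝ => C p.1 p.2) unitSquare := by
  refine continuousOn_prod_of_continuousOn_lipschitzOnWith _ 1 (fun u hu => ?_) (fun v hv => ?_)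
  · refine (LipschitzOnWith.of_le_add_mul 1 fun v hv v' hv' => ?_).continuousOn
    simpa [Real.dist_eq] using h.le_add_abs_sub_snd hu hv hv'
  · exact LipschitzOnWith.of_le_add_mul 1 fun u hu u' hu' => by
      simpa [Real.dist_eq] using h.le_add_abs_sub_fst hu hu' hv

end IsCopula

lemma measure_ext_Iic_prod {ρ₁ ρ₂ : Measure (ℝ × ℝ)} [IsFiniteMeasure ρ₁]
    (h : ∀ a b : ℝ, ρ₁ (Iic a ×ˢ Iic b) = ρ₂ (Iic a ×ˢ Iic b))
    (huniv : ρ₁ univ = ρ₂ univ) :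
    ρ₁ = ρ₂ := by
  have hspan : IsCountablySpanning (range (Iic : ℝ → Set ℝ)) :=
    ⟨fun n => Iic (n : ℝ), fun n => mem_range_self _,
      iUnion_eq_univ_iff.2 fun x => (exists_nat_ge x).imp fun _ hn => hn⟩
  have hgen : MeasurableSpace.generateFrom (range (Iic : ℝ → Set ℝ)) = Real.measurableSpace :=
    (BorelSpace.measurable_eq.trans (borel_eq_generateFrom_Iic ℝ)).symm
  refine ext_of_generate_finite _ (generateFrom_eq_prod hgen hgen hspan hspan).symm
    (isPiSystem_Iic.prod isPiSystem_Iic) ?_ huniv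
  rintro _ ⟨_, ⟨a, rfl⟩, _, ⟨b, rfl⟩, rfl⟩
  exact h a b

section CopulaMeasure

variable {A : ℝ → ℝ → ℝ} {μ : Measure (ℝ × ℝ)}

lemma restrict_unitSquare_Iic_prod_Iic (hA : IsCopula A) (hdist : IsDistributionOf μ A)
    (a b : ℝ) :
    μ.restrict unitSquare (Iic a ×ˢ Iic b) = ENNReal.ofReal (A (clampUnit a) (clampUnit b)) := by
  rw [Measure.restrict_apply (measurableSet_Iic.prod measurableSet_Iic), unitSquare,
    prod_inter_prod]
  rcases lt_or_ge a 0 with ha | ha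
  · rw [Iic_inter_Icc_zero_one_of_neg ha, empty_prod, measure_empty, clampUnit_of_neg ha,
      hA.2.1 _ (clampUnit_mem b), ENNReal.ofReal_zero]
  rcases lt_or_ge b 0 with hb | hb
  · rw [Iic_inter_Icc_zero_one_of_neg hb, prod_empty, measure_empty, clampUnit_of_neg hb,
      hA.1 _ (clampUnit_mem a), ENNReal.ofReal_zero]
  rw [Iic_inter_Icc_zero_one_of_nonneg ha, Iic_inter_Icc_zero_one_of_nonneg hb]
  exact hdist _ (clampUnit_mem a) _ (clampUnit_mem b)

lemma restrict_unitSquare_Iic_prod_univ (hA : IsCopula A) (hdist : IsDistributionOf μ A)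
    (a : ℝ) : μ.restrict unitSquare (Iic a ×ˢ univ) = ENNReal.ofReal (clampUnit a) := by
  have hIic :
      μ.restrict unitSquare (Iic a ×ˢ univ) = μ.restrict unitSquare (Iic a ×ˢ Iic 1) := by
    rw [Measure.restrict_apply (measurableSet_Iic.prod .univ),
      Measure.restrict_apply (measurableSet_Iic.prod measurableSet_Iic), unitSquare,
      prod_inter_prod, prod_inter_prod, univ_inter, inter_eq_right.2 Icc_subset_Iic_self]
  rw [hIic, restrict_unitSquare_Iic_prod_Iic hA hdist,
    clampUnit_of_mem (right_mem_Icc.2 zero_le_one),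
    hA.2.2.1 _ (clampUnit_mem a)]

lemma restrict_unitSquare_univ_prod_Iic (hA : IsCopula A) (hdist : IsDistributionOf μ A)
    (b : ℝ) : μ.restrict unitSquare (univ ×ˢ Iic b) = ENNReal.ofReal (clampUnit b) := by
  have hIic :
      μ.restrict unitSquare (univ ×ˢ Iic b) = μ.restrict unitSquare (Iic 1 ×ˢ Iic b) := by
    rw [Measure.restrict_apply (MeasurableSet.univ.prod measurableSet_Iic),
      Measure.restrict_apply (measurableSet_Iic.prod measurableSet_Iic), unitSquare,
      prod_inter_prod, prod_inter_prod, univ_inter, inter_eq_right.2 Icc_subset_Iic_self]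
  rw [hIic, restrict_unitSquare_Iic_prod_Iic hA hdist,
    clampUnit_of_mem (right_mem_Icc.2 zero_le_one),
    hA.2.2.2.1 _ (clampUnit_mem b)]

lemma isProbabilityMeasure_restrict_unitSquare (hA : IsCopula A) (hdist : IsDistributionOf μ A) :
    IsProbabilityMeasure (μ.restrict unitSquare) := by
  have h1 : (1:ℝ) ∈ Icc (0:ℝ) 1 := right_mem_Icc.2 zero_le_one
  constructor
  rw [Measure.restrict_apply_univ, unitSquare, hdist 1 h1 1 h1, hA.2.2.1 1 h1, ENNReal.ofReal_one]

lemma eq_volume_restrict_Icc_of_Iic {ρ : Measure ℝ} [IsFiniteMeasure ρ]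
    (h : ∀ a, ρ (Iic a) = ENNReal.ofReal (clampUnit a)) : ρ = volume.restrict (Icc 0 1) := by
  refine Measure.ext_of_Iic _ _ fun a => ?_
  rw [h, Measure.restrict_apply measurableSet_Iic]
  rcases lt_or_ge a 0 with ha | ha
  · rw [Iic_inter_Icc_zero_one_of_neg ha, measure_empty, clampUnit_of_neg ha, ENNReal.ofReal_zero]
  · rw [Iic_inter_Icc_zero_one_of_nonneg ha, Real.volume_Icc, sub_zero]

lemma map_fst_restrict_unitSquare (hA : IsCopula A) (hdist : IsDistributionOf μ A) :
    (μ.restrict unitSquare).map Prod.fst = volume.restrict (Icc 0 1) := by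
  have := isProbabilityMeasure_restrict_unitSquare hA hdist
  refine eq_volume_restrict_Icc_of_Iic fun a => ?_
  rw [Measure.map_apply measurable_fst measurableSet_Iic, ← prod_univ,
    restrict_unitSquare_Iic_prod_univ hA hdist]

lemma map_snd_restrict_unitSquare (hA : IsCopula A) (hdist : IsDistributionOf μ A) :
    (μ.restrict unitSquare).map Prod.snd = volume.restrict (Icc 0 1) := by
  have := isProbabilityMeasure_restrict_unitSquare hA hdist
  refine eq_volume_restrict_Icc_of_Iic fun b => ?_
  rw [Measure.map_apply measurable_snd measurableSet_Iic, ← univ_prod,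
    restrict_unitSquare_univ_prod_Iic hA hdist]

lemma integral_snd_restrict_unitSquare (hA : IsCopula A) (hdist : IsDistributionOf μ A) :
    ∫ p in unitSquare, p.2 ∂μ = 1 / 2 := by
  have hmap :
      ∫ x, x ∂((μ.restrict unitSquare).map Prod.snd) = ∫ p in unitSquare, p.2 ∂μ :=
    integral_map measurable_snd.aemeasurable aestronglyMeasurable_id
  rw [← hmap, map_snd_restrict_unitSquare hA hdist, integral_Icc_eq_integral_Ioc,
    ← intervalIntegral.integral_of_le zero_le_one, integral_id]
  norm_num

end CopulaMeasure

def reflectFst : ℝ × ℝ ≃ᵐ ℝ × ℝ :=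
  (MeasurableEquiv.subLeft 1).prodCongr (MeasurableEquiv.refl ℝ)

lemma reflectFst_apply (p : ℝ × ℝ) : reflectFst p = (1 - p.1, p.2) := rfl

section GammaInvariant

variable {A : ℝ → ℝ → ℝ} {μ : Measure (ℝ × ℝ)}

lemma measurePreserving_prodComm_restrict_unitSquare (hA : IsCopula A)
    (hinv : IsGammaInvariant A) (hdist : IsDistributionOf μ A) :
    MeasurePreserving MeasurableEquiv.prodComm (μ.restrict unitSquare)
      (μ.restrict unitSquare) := by
  have := isProbabilityMeasure_restrict_unitSquare hA hdist
  have : IsProbabilityMeasure ((μ.restrict unitSquare).map MeasurableEquiv.prodComm) :=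
    Measure.isProbabilityMeasure_map MeasurableEquiv.prodComm.measurable.aemeasurable
  refine ⟨MeasurableEquiv.prodComm.measurable, measure_ext_Iic_prod (fun a b => ?_) (by simp)⟩
  rw [MeasurableEquiv.map_apply, show ⇑MeasurableEquiv.prodComm = @Prod.swap ℝ ℝ from rfl,
    preimage_swap_prod,
    restrict_unitSquare_Iic_prod_Iic hA hdist, restrict_unitSquare_Iic_prod_Iic hA hdist,
    (hinv _ (clampUnit_mem b) _ (clampUnit_mem a)).1]

lemma measurePreserving_reflectFst_restrict_unitSquare (hA : IsCopula A)
    (hinv : IsGammaInvariant A) (hdist : IsDistributionOf μ A) :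
    MeasurePreserving reflectFst (μ.restrict unitSquare) (μ.restrict unitSquare) := by
  have := isProbabilityMeasure_restrict_unitSquare hA hdist
  have : IsProbabilityMeasure ((μ.restrict unitSquare).map reflectFst) :=
    Measure.isProbabilityMeasure_map reflectFst.measurable.aemeasurable
  refine ⟨reflectFst.measurable, measure_ext_Iic_prod (fun a b => ?_) (by simp)⟩
  have hpre : reflectFst ⁻¹' (Iic a ×ˢ Iic b) = Ici (1 - a) ×ˢ Iic b := by
    ext p
    simp only [mem_preimage, reflectFst_apply, mem_prod, mem_Iic, mem_Ici, sub_le_comm]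
  have hatom : (μ.restrict unitSquare).map Prod.fst {1 - a} = 0 := by
    rw [map_fst_restrict_unitSquare hA hdist, Measure.restrict_apply (measurableSet_singleton _)]
    exact measure_mono_null inter_subset_left Real.volume_singleton
  have hae : Ioi (1 - a) ×ˢ Iic b =ᵐ[μ.restrict unitSquare] Ici (1 - a) ×ˢ Iic b :=
    (ae_eq_comp measurable_fst.aemeasurable (Ioi_ae_eq_Ici' hatom)).inter (ae_eq_refl _)
  have hdiff : Ioi (1 - a) ×ˢ Iic b = (univ ×ˢ Iic b) \ (Iic (1 - a) ×ˢ Iic b) := by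
    rw [prod_sdiff_prod, sdiff_self, prod_empty, empty_union, ← compl_eq_univ_sdiff, compl_Iic]
  rw [MeasurableEquiv.map_apply, hpre, ← measure_congr hae, hdiff,
    measure_sdiff (prod_mono_left (subset_univ _))
      (measurableSet_Iic.prod measurableSet_Iic).nullMeasurableSet (measure_ne_top _ _),
    restrict_unitSquare_univ_prod_Iic hA hdist, restrict_unitSquare_Iic_prod_Iic hA hdist,
    restrict_unitSquare_Iic_prod_Iic hA hdist,
    ← ENNReal.ofReal_sub _ (hA.nonneg (clampUnit_mem _) (clampUnit_mem _)), clampUnit_one_sub]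
  congr 1
  linarith [(hinv _ (clampUnit_mem a) _ (clampUnit_mem b)).2]

end GammaInvariant

section BiForm

variable {A C : ℝ → ℝ → ℝ} {μ : Measure (ℝ × ℝ)}

lemma biForm_swap (hA : IsCopula A) (hinv : IsGammaInvariant A) (hdist : IsDistributionOf μ A) :
    biForm μ (fun u v => C v u) = biForm μ C :=
  (measurePreserving_prodComm_restrict_unitSquare hA hinv hdist).integral_comp'
    (fun p => C p.1 p.2)

lemma biForm_reflect (hA : IsCopula A) (hinv : IsGammaInvariant A)
    (hdist : IsDistributionOf μ A) (hC : IsCopula C) :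
    biForm μ (fun u v => v - C (1 - u) v) = 1 / 2 - biForm μ C := by
  have hrefl := measurePreserving_reflectFst_restrict_unitSquare hA hinv hdist
  have hfin : μ unitSquare ≠ ⊤ := by
    have := isProbabilityMeasure_restrict_unitSquare hA hdist
    rw [← Measure.restrict_apply_univ]
    exact measure_ne_top _ _
  have hCint : IntegrableOn (fun p : ℝ × ℝ => C p.1 p.2) unitSquare μ :=
    hC.continuousOn.integrableOn_of_subset_isCompact isCompact_unitSquare
      measurableSet_unitSquare Subset.rfl hfin
  have hsnd : IntegrableOn (fun p : ℝ × ℝ => p.2) unitSquare μ :=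
    continuous_snd.continuousOn.integrableOn_of_subset_isCompact isCompact_unitSquare
      measurableSet_unitSquare Subset.rfl hfin
  have hCrefl : IntegrableOn (fun p : ℝ × ℝ => C (1 - p.1) p.2) unitSquare μ :=
    (hrefl.integrable_comp_emb reflectFst.measurableEmbedding).2 hCint
  calc biForm μ (fun u v => v - C (1 - u) v)
      = ∫ p in unitSquare, p.2 ∂μ - ∫ p in unitSquare, C (1 - p.1) p.2 ∂μ :=
        integral_sub hsnd hCrefl
    _ = 1 / 2 - biForm μ C := by
        rw [integral_snd_restrict_unitSquare hA hdist]
        congr 1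
        exact hrefl.integral_comp' (fun p => C p.1 p.2)

end BiForm

section Diagonal

variable {A : ℝ → ℝ → ℝ} {μ : Measure (ℝ × ℝ)}

lemma measureReal_restrict_unitSquare_Ioi_prod_Ioi (hA : IsCopula A)
    (hdist : IsDistributionOf μ A) {t : ℝ} (ht : t ∈ Icc (0:ℝ) 1) :
    (μ.restrict unitSquare).real (Ioi t ×ˢ Ioi t) = 1 - 2 * t + A t t := by
  have := isProbabilityMeasure_restrict_unitSquare hA hdist
  have hunion := measureReal_union_add_inter (μ := μ.restrict unitSquare) (s := Iic t ×ˢ univ)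
    (MeasurableSet.univ.prod (measurableSet_Iic (a := t)))
  rw [prod_inter_prod, inter_univ, univ_inter] at hunion
  simp only [measureReal_def, restrict_unitSquare_Iic_prod_univ hA hdist,
    restrict_unitSquare_univ_prod_Iic hA hdist, restrict_unitSquare_Iic_prod_Iic hA hdist,
    clampUnit_of_mem ht, ENNReal.toReal_ofReal ht.1, ENNReal.toReal_ofReal (hA.nonneg ht ht)]
    at hunion
  rw [← compl_compl (Ioi t ×ˢ Ioi t), compl_prod_eq_union, compl_Ioi,
    measureReal_compl
      ((measurableSet_Iic.prod .univ).union (MeasurableSet.univ.prod measurableSet_Iic)),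
    probReal_univ, measureReal_def]
  linarith

lemma integral_min_restrict_unitSquare (hA : IsCopula A) (hdist : IsDistributionOf μ A) :
    ∫ p in unitSquare, min p.1 p.2 ∂μ = ∫ t in (0:ℝ)..1, (1 - 2 * t + A t t) := by
  have := isProbabilityMeasure_restrict_unitSquare hA hdist
  have hint : Integrable (fun p : ℝ × ℝ => min p.1 p.2) (μ.restrict unitSquare) :=
    (continuous_fst.min continuous_snd).continuousOn.integrableOn_of_subset_isCompact
      isCompact_unitSquare measurableSet_unitSquare Subset.rfl
      (by rw [← Measure.restrict_apply_univ]; exact measure_ne_top _ _)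
  have hnn : 0 ≤ᵐ[μ.restrict unitSquare] fun p : ℝ × ℝ => min p.1 p.2 :=
    ae_restrict_of_forall_mem measurableSet_unitSquare fun p hp => le_min hp.1.1 hp.2.1
  have hlevel : ∀ t, {p : ℝ × ℝ | t < min p.1 p.2} = Ioi t ×ˢ Ioi t := fun t => by
    ext p
    simp
  rw [hint.integral_eq_integral_meas_lt hnn, intervalIntegral.integral_of_le zero_le_one,
    setIntegral_eq_of_subset_of_forall_sdiff_eq_zero measurableSet_Ioi Ioc_subset_Ioi_self
      fun t ht => ?_]
  · refine setIntegral_congr_fun measurableSet_Ioc fun t ht => ?_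
    rw [hlevel, measureReal_restrict_unitSquare_Ioi_prod_Ioi hA hdist ⟨ht.1.le, ht.2⟩]
  · have h1t : 1 < t := by simpa using ht
    rw [hlevel, measureReal_def, Measure.restrict_apply (measurableSet_Ioi.prod measurableSet_Ioi),
      unitSquare, prod_inter_prod]
    have hempty : Ioi t ∩ Icc (0:ℝ) 1 = ∅ :=
      eq_empty_of_forall_notMem fun x hx => by linarith [mem_Ioi.1 hx.1, hx.2.2]
    rw [hempty, empty_prod, measure_empty, ENNReal.toReal_zero]

lemma one_quarter_lt_integral_diag (hA : IsCopula A) (hhalf : 0 < A (1 / 2) (1 / 2)) :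
    1 / 4 < ∫ t in (0:ℝ)..1, (1 - 2 * t + A t t) := by
  have hcont : ContinuousOn (fun t => 1 - 2 * t + A t t) (Icc 0 1) :=
    (continuousOn_const.sub (continuousOn_const.mul continuousOn_id)).add
      (hA.continuousOn.comp (continuousOn_id.prodMk continuousOn_id) fun t ht => ⟨ht, ht⟩)
  have hcont₁ := hcont.mono (Icc_subset_Icc_right (by norm_num : (1 / 2 : ℝ) ≤ 1))
  have hcont₂ := hcont.mono (Icc_subset_Icc_left (by norm_num : (0 : ℝ) ≤ 1 / 2))
  have hlow : ∫ t in (0:ℝ)..1 / 2, (1 - 2 * t) < ∫ t in (0:ℝ)..1 / 2, (1 - 2 * t + A t t) :=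
    intervalIntegral.integral_lt_integral_of_continuousOn_of_le_of_exists_lt (by norm_num)
      (by fun_prop) hcont₁
      (fun t ht => by
        have ht' : t ∈ Icc (0:ℝ) 1 := ⟨ht.1.le, by linarith [ht.2]⟩
        linarith [hA.nonneg ht' ht'])
      ⟨1 / 2, by norm_num, by linarith⟩
  have hhigh : 0 ≤ ∫ t in (1 / 2 : ℝ)..1, (1 - 2 * t + A t t) :=
    intervalIntegral.integral_nonneg (by norm_num) fun t ht => by
      have ht' : t ∈ Icc (0:ℝ) 1 := ⟨by linarith [ht.1], ht.2⟩
      linarith [hA.add_sub_one_le_s2 ht' ht']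
  have hlin : ∫ t in (0:ℝ)..1 / 2, (1 - 2 * t) = 1 / 4 := by
    rw [intervalIntegral.integral_sub intervalIntegrable_const
      (intervalIntegral.intervalIntegrable_id.const_mul 2),
      intervalIntegral.integral_const_mul, integral_id, intervalIntegral.integral_const]
    norm_num
  rw [← intervalIntegral.integral_add_adjacent_intervals
    (hcont₁.intervalIntegrable_of_Icc (by norm_num))
    (hcont₂.intervalIntegrable_of_Icc (by norm_num))]
  linarith

end Diagonal

lemma IsGammaInvariant.apply_half_half {A : ℝ → ℝ → ℝ} (hinv : IsGammaInvariant A) :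
    A (1 / 2) (1 / 2) = 1 / 4 := by
  have h := (hinv (1 / 2) (by norm_num) (1 / 2) (by norm_num)).2
  norm_num at h
  linarith

lemma one_quarter_lt_biForm_min {A : ℝ → ℝ → ℝ} {μ : Measure (ℝ × ℝ)}
    (hA : IsCopula A) (hinv : IsGammaInvariant A) (hdist : IsDistributionOf μ A) :
    1 / 4 < biForm μ (fun u v => min u v) := by
  rw [biForm, integral_min_restrict_unitSquare hA hdist]
  exact one_quarter_lt_integral_diag hA (by rw [hinv.apply_half_half]; norm_num)

theorem stmt2_general (A : ℝ → ℝ → ℝ) (μ : MeasureTheory.Measure (ℝ × ℝ))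
    (hA : IsCopula A) (hinv : IsGammaInvariant A)
    (hdist : IsDistributionOf μ A)
    (κ : (ℝ → ℝ → ℝ) → ℝ)
    (hκ : ∀ C, κ C = (biForm μ C - 1/4) / (biForm μ (fun u v => min u v) - 1/4)) :
    κ (fun u v => min u v) = 1 ∧
    (∀ C, IsCopula C → κ (fun u v => C v u) = κ C) ∧
    (∀ C, IsCopula C → κ (fun u v => v - C (1 - u) v) = -(κ C)) := by
  have hM : biForm μ (fun u v => min u v) - 1 / 4 ≠ 0 :=
    (sub_pos.2 (one_quarter_lt_biForm_min hA hinv hdist)).ne'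
  refine ⟨by rw [hκ, div_self hM], fun C _ => by rw [hκ, hκ, biForm_swap hA hinv hdist], ?_⟩
  intro C hC
  rw [hκ, hκ C, biForm_reflect hA hinv hdist hC, ← neg_div]
  ring_nf

theorem stmt2 (A : ℝ → ℝ → ℝ) (μ : MeasureTheory.Measure (ℝ × ℝ))
    (hA : IsCopula A) (hinv : IsGammaInvariant A)
    (hμ : MeasureTheory.IsProbabilityMeasure μ) (hdist : IsDistributionOf μ A)
    (κ : (ℝ → ℝ → ℝ) → ℝ)
    (hκ : ∀ C, κ C = (biForm μ C - 1/4) / (biForm μ (fun u v => min u v) - 1/4)) :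
    κ (fun u v => min u v) = 1 ∧
    (∀ C, IsCopula C → κ (fun u v => C v u) = κ C) ∧
    (∀ C, IsCopula C → κ (fun u v => v - C (1 - u) v) = -(κ C)) :=
  stmt2_general A μ hA hinv hdist κ hκ
end

section
/- For every q ∈ [0,1], the function E_q : [0,1]² → [0,1] defined by E_q(u,v) := (1−q)·uv + q·(1/2)(min(u,v) + max(u+v−1,0)) is a Γ-invariant copula: it is a copula, E_q(u,v) = E_q(v,u), and E_q(u,v) = v − E_q(1−u,v) for all u,v ∈ [0,1]. -/
open MeasureTheory Set

/-! Both defining properties are preserved by convex combinations, and `E_q` is the convex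
combination of `Π` and `M_{Γ^ν} = (M + W) / 2`, where `M = min` and `W(u,v) = max (u + v - 1) 0`
are the Fréchet–Hoeffding bounds. `Π` is Γ-invariant directly, while `M` and `W` are exchanged by
the reflection `C ↦ (u, v) ↦ v - C (1 - u) v`, so their average is Γ-invariant. -/

theorem IsCopula.convexComb {C D : ℝ → ℝ → ℝ} (hC : IsCopula C) (hD : IsCopula D) {t : ℝ}
    (ht : t ∈ Icc (0:ℝ) 1) : IsCopula fun u v => (1 - t) * C u v + t * D u v := by
  obtain ⟨hC₁, hC₂, hC₃, hC₄, hC₅, hC₆⟩ := hC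
  obtain ⟨hD₁, hD₂, hD₃, hD₄, hD₅, hD₆⟩ := hD
  obtain ⟨ht₀, ht₁⟩ := ht
  refine ⟨fun u hu => ?_, fun v hv => ?_, fun u hu => ?_, fun v hv => ?_,
    fun u₁ u₂ v₁ v₂ hu₁ hu₂ hv₁ hv₂ hu hv => ?_, fun u hu v hv => ?_⟩
  · simp only [hC₁ u hu, hD₁ u hu]; ring
  · simp only [hC₂ v hv, hD₂ v hv]; ring
  · simp only [hC₃ u hu, hD₃ u hu]; ring
  · simp only [hC₄ v hv, hD₄ v hv]; ring
  · have hCvol := hC₅ u₁ u₂ v₁ v₂ hu₁ hu₂ hv₁ hv₂ hu hv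
    have hDvol := hD₅ u₁ u₂ v₁ v₂ hu₁ hu₂ hv₁ hv₂ hu hv
    nlinarith [mul_nonneg (sub_nonneg.2 ht₁) hCvol, mul_nonneg ht₀ hDvol]
  · simpa only [smul_eq_mul] using
      convex_Icc (0:ℝ) 1 (hC₆ u hu v hv) (hD₆ u hu v hv) (sub_nonneg.2 ht₁) ht₀ (by ring)

theorem IsGammaInvariant.convexComb {C D : ℝ → ℝ → ℝ} (hC : IsGammaInvariant C)
    (hD : IsGammaInvariant D) (t : ℝ) :
    IsGammaInvariant fun u v => (1 - t) * C u v + t * D u v := by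
  intro u hu v hv
  obtain ⟨hCsymm, hCrefl⟩ := hC u hu v hv
  obtain ⟨hDsymm, hDrefl⟩ := hD u hu v hv
  dsimp only
  constructor
  · rw [hCsymm, hDsymm]
  · rw [hCrefl, hDrefl]; ring

theorem isCopula_mul : IsCopula fun u v => u * v := by
  refine ⟨fun u _ => mul_zero u, fun v _ => zero_mul v, fun u _ => mul_one u,
    fun v _ => one_mul v, fun u₁ u₂ v₁ v₂ _ _ _ _ hu hv => ?_, fun u hu v hv => ?_⟩
  · nlinarith [mul_nonneg (sub_nonneg.2 hu) (sub_nonneg.2 hv)]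
  · exact ⟨mul_nonneg hu.1 hv.1, mul_le_one₀ hu.2 hv.1 hv.2⟩

theorem isGammaInvariant_mul : IsGammaInvariant fun u v => u * v :=
  fun u _ v _ => ⟨mul_comm u v, by ring⟩

theorem isCopula_min : IsCopula fun u v => min u v := by
  refine ⟨fun u hu => min_eq_right hu.1, fun v hv => min_eq_left hv.1,
    fun u hu => min_eq_left hu.2, fun v hv => min_eq_right hv.2,
    fun u₁ u₂ v₁ v₂ _ _ _ _ hu hv => ?_, fun u hu v hv => ⟨le_min hu.1 hv.1, min_le_of_left_le hu.2⟩⟩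
  simp only [min_def]; split_ifs <;> linarith

theorem isCopula_max_add_sub_one : IsCopula fun u v => max (u + v - 1) 0 := by
  refine ⟨fun u hu => ?_, fun v hv => ?_, fun u hu => ?_, fun v hv => ?_,
    fun u₁ u₂ v₁ v₂ _ _ _ _ hu hv => ?_, fun u hu v hv => ⟨le_max_right _ _, ?_⟩⟩
  · exact max_eq_right (by linarith [hu.2])
  · exact max_eq_right (by linarith [hv.2])
  · simp only [add_sub_cancel_right, max_eq_left hu.1]
  · simp only [add_sub_cancel_left, max_eq_left hv.1]
  · simp only [max_def]; split_ifs <;> linarith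
  · exact max_le (by linarith [hu.2, hv.2]) zero_le_one

theorem min_one_sub_eq_sub_max (u v : ℝ) : min (1 - u) v = v - max (u + v - 1) 0 := by
  simp only [min_def, max_def]; split_ifs <;> linarith

theorem max_one_sub_eq_sub_min (u v : ℝ) : max (1 - u + v - 1) 0 = v - min u v := by
  simp only [min_def, max_def]; split_ifs <;> linarith

/-- The copula `M_{Γ^ν}`. -/
noncomputable def copulaMGamma (u v : ℝ) : ℝ := (1/2) * (min u v + max (u + v - 1) 0)

theorem isCopula_copulaMGamma : IsCopula copulaMGamma := by
  convert isCopula_min.convexComb isCopula_max_add_sub_one (t := 1/2) ⟨by norm_num, by norm_num⟩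
    using 1
  funext u v
  unfold copulaMGamma
  ring

theorem isGammaInvariant_copulaMGamma : IsGammaInvariant copulaMGamma := by
  intro u _ v _
  unfold copulaMGamma
  constructor
  · rw [min_comm, add_comm u v]
  · rw [min_one_sub_eq_sub_max, max_one_sub_eq_sub_min]; ring

theorem stmt9 (q : ℝ) (hq : q ∈ Icc (0:ℝ) 1) :
    IsCopula (fun u v => (1 - q) * (u * v) + q * ((1/2) * (min u v + max (u + v - 1) 0))) ∧
    IsGammaInvariant
      (fun u v => (1 - q) * (u * v) + q * ((1/2) * (min u v + max (u + v - 1) 0))) :=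
  ⟨isCopula_mul.convexComb isCopula_copulaMGamma hq,
    isGammaInvariant_mul.convexComb isGammaInvariant_copulaMGamma q⟩
end

section
/- Let n ≥ 1, let A be a bivariate copula, and let σ be a permutation of {1,…,n}. Then Σ_{k=1}^n A(k/(n+1), (n+1−k)/(n+1)) ≤ Σ_{k=1}^n A(k/(n+1), σ(k)/(n+1)) ≤ Σ_{k=1}^n A(k/(n+1), k/(n+1)). Equivalently, with ⟨C,A⟩_n := (1/n)Σ_k A(k/(n+1), σ(k)/(n+1)), ⟨M,A⟩_n := (1/n)Σ_k A(k/(n+1), k/(n+1)) and ⟨W,A⟩_n := (1/n)Σ_k A(k/(n+1), (n+1−k)/(n+1)), one has ⟨W,A⟩_n ≤ ⟨C,A⟩_n ≤ ⟨M,A⟩_n. -/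
open MeasureTheory Set

/-!
On the grid `tₘ = m / (n + 1)`, telescoping writes `A (t_a) (t_b)` as the sum of the
`A`-volumes `Δᵢⱼ ≥ 0` of the cells `[tᵢ, tᵢ₊₁] × [tⱼ, tⱼ₊₁]` with `i < a`, `j < b`, because `A`
vanishes on the lower and left edges. Summing over the points `(k + 1, σ k + 1)` therefore weights
the cell `(i, j)` by the number `N_σ(i, j)` of `k` with `i ≤ k` and `j ≤ σ k`. As `σ` is a
bijection, inclusion–exclusion gives `n - i - j ≤ N_σ(i, j) ≤ n - max i j`, with equality on the
left for the reversal `k ↦ n - 1 - k` and on the right for the identity.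
-/

open Finset

section RectIncrement

variable {G : Type*} [AddCommGroup G]

def rectIncr (F : ℕ → ℕ → G) (i j : ℕ) : G :=
  F (i + 1) (j + 1) - F (i + 1) j - F i (j + 1) + F i j

theorem sum_range_sum_range_rectIncr (F : ℕ → ℕ → G) (a b : ℕ) :
    ∑ i ∈ range a, ∑ j ∈ range b, rectIncr F i j = F a b - F a 0 - F 0 b + F 0 0 := by
  have inner : ∀ i, ∑ j ∈ range b, rectIncr F i j
      = (F (i + 1) b - F (i + 1) 0) - (F i b - F i 0) := fun i => by
    rw [sub_sub_sub_comm, ← sum_range_sub fun j => F (i + 1) j - F i j]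
    exact sum_congr rfl fun j _ => by simp only [rectIncr]; abel
  simp only [inner, sum_range_sub fun i => F i b - F i 0]
  abel

theorem sum_range_ite_le (g : ℕ → G) {m n : ℕ} (h : m < n) :
    ∑ i ∈ range n, (if i ≤ m then g i else 0) = ∑ i ∈ range (m + 1), g i := by
  rw [← sum_filter]
  congr 1
  ext i
  simp only [Finset.mem_filter, Finset.mem_range]
  omega

end RectIncrement

section SurvivalCount

variable {n : ℕ}

def survivalCount (τ : Fin n → Fin n) (i j : ℕ) : ℕ :=
  #{k : Fin n | i ≤ (k : ℕ) ∧ j ≤ (τ k : ℕ)}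

theorem sum_apply_succ_eq_sum_survivalCount_smul {G : Type*} [AddCommGroup G]
    (F : ℕ → ℕ → G) (h₁ : ∀ m ≤ n, F m 0 = 0) (h₂ : ∀ m ≤ n, F 0 m = 0)
    (τ : Fin n → Fin n) :
    ∑ k : Fin n, F (k + 1) ((τ k : ℕ) + 1)
      = ∑ i ∈ range n, ∑ j ∈ range n, survivalCount τ i j • rectIncr F i j := by
  have expand : ∀ k : Fin n, F (k + 1) ((τ k : ℕ) + 1) = ∑ i ∈ range n, ∑ j ∈ range n,
      if i ≤ (k : ℕ) ∧ j ≤ (τ k : ℕ) then rectIncr F i j else 0 := fun k => by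
    simp only [ite_and, sum_ite_irrel, sum_const_zero]
    rw [sum_range_ite_le _ k.isLt]
    simp only [sum_range_ite_le _ (τ k).isLt]
    rw [sum_range_sum_range_rectIncr, h₁ _ k.isLt, h₂ _ (τ k).isLt, h₁ 0 (Nat.zero_le n)]
    simp only [sub_zero, add_zero]
  simp only [expand]
  rw [sum_comm]
  refine sum_congr rfl fun i _ => ?_
  rw [sum_comm]
  refine sum_congr rfl fun j _ => ?_
  rw [← sum_filter, sum_const]
  rfl

theorem card_filter_fin_val (p : ℕ → Prop) [DecidablePred p] :
    #{k : Fin n | p k} = #{m ∈ range n | p m} := by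
  rw [card_filter, card_filter, Fin.sum_univ_eq_sum_range fun m => if p m then 1 else 0]

theorem card_filter_le_val (i : ℕ) : #{k : Fin n | i ≤ (k : ℕ)} = n - i := by
  rw [card_filter_fin_val (i ≤ ·), ← Nat.card_Ico]
  congr 1
  ext m
  simp only [Finset.mem_filter, Finset.mem_range, Finset.mem_Ico]
  omega

theorem card_filter_le_perm_val (σ : Equiv.Perm (Fin n)) (j : ℕ) :
    #{k : Fin n | j ≤ (σ k : ℕ)} = n - j := by
  rw [← card_filter_le_val j]
  exact card_equiv σ (by simp)

theorem survivalCount_perm_le (σ : Equiv.Perm (Fin n)) (i j : ℕ) :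
    survivalCount σ i j ≤ n - max i j := by
  have hi : survivalCount σ i j ≤ n - i :=
    (Finset.card_le_card (monotone_filter_right _ fun _ _ => And.left)).trans_eq
      (card_filter_le_val i)
  have hj : survivalCount σ i j ≤ n - j :=
    (Finset.card_le_card (monotone_filter_right _ fun _ _ => And.right)).trans_eq
      (card_filter_le_perm_val σ j)
  omega

theorem sub_sub_le_survivalCount_perm (σ : Equiv.Perm (Fin n)) (i j : ℕ) :
    n - i - j ≤ survivalCount σ i j := by
  have incl_excl :=
    card_union_add_card_inter {k : Fin n | i ≤ (k : ℕ)} {k : Fin n | j ≤ (σ k : ℕ)}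
  have union_le := card_le_univ (({k : Fin n | i ≤ (k : ℕ)} : Finset _) ∪
    ({k : Fin n | j ≤ (σ k : ℕ)} : Finset _))
  rw [← filter_and, card_filter_le_val, card_filter_le_perm_val] at incl_excl
  rw [Fintype.card_fin] at union_le
  unfold survivalCount
  omega

theorem survivalCount_id (i j : ℕ) : survivalCount (n := n) id i j = n - max i j := by
  simp only [survivalCount, id, ← max_le_iff]
  exact card_filter_le_val _

theorem survivalCount_rev (i j : ℕ) : survivalCount (n := n) Fin.rev i j = n - i - j := by
  simp only [survivalCount, Fin.val_rev]
  rw [card_filter_fin_val (fun m => i ≤ m ∧ j ≤ n - (m + 1)), Nat.sub_right_comm,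
    ← Nat.card_Ico i (n - j)]
  congr 1
  ext m
  simp only [Finset.mem_filter, Finset.mem_range, Finset.mem_Ico]
  omega

theorem sum_survivalCount_smul_le {G : Type*} [AddCommGroup G] [PartialOrder G]
    [IsOrderedAddMonoid G] {F : ℕ → ℕ → G} (hF : ∀ i < n, ∀ j < n, 0 ≤ rectIncr F i j)
    {τ τ' : Fin n → Fin n} (h : ∀ i j, survivalCount τ i j ≤ survivalCount τ' i j) :
    ∑ i ∈ range n, ∑ j ∈ range n, survivalCount τ i j • rectIncr F i j
      ≤ ∑ i ∈ range n, ∑ j ∈ range n, survivalCount τ' i j • rectIncr F i j :=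
  sum_le_sum fun i hi => sum_le_sum fun j hj =>
    nsmul_le_nsmul_left (hF i (Finset.mem_range.1 hi) j (Finset.mem_range.1 hj)) (h i j)

end SurvivalCount

section CopulaGrid

noncomputable def copulaGrid (A : ℝ → ℝ → ℝ) (n i j : ℕ) : ℝ :=
  A (i / (n + 1)) (j / (n + 1))

theorem div_succ_mem_Icc {n m : ℕ} (h : m ≤ n + 1) : (m : ℝ) / (n + 1) ∈ Icc (0 : ℝ) 1 :=
  ⟨by positivity, div_le_one_of_le₀ (by exact_mod_cast h) (by positivity)⟩

variable {A : ℝ → ℝ → ℝ} {n : ℕ}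

theorem IsCopula.copulaGrid_zero_right (hA : IsCopula A) {m : ℕ} (hm : m ≤ n + 1) :
    copulaGrid A n m 0 = 0 := by
  simpa [copulaGrid] using hA.1 _ (div_succ_mem_Icc hm)

theorem IsCopula.copulaGrid_zero_left (hA : IsCopula A) {m : ℕ} (hm : m ≤ n + 1) :
    copulaGrid A n 0 m = 0 := by
  simpa [copulaGrid] using hA.2.1 _ (div_succ_mem_Icc hm)

theorem IsCopula.rectIncr_copulaGrid_nonneg (hA : IsCopula A) {i j : ℕ} (hi : i ≤ n)
    (hj : j ≤ n) : 0 ≤ rectIncr (copulaGrid A n) i j := by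
  have mono {a b : ℕ} (h : a ≤ b) : (a : ℝ) / (n + 1) ≤ b / (n + 1) := by gcongr
  have := hA.2.2.2.2.1 _ _ _ _ (div_succ_mem_Icc (by omega : i ≤ n + 1))
    (div_succ_mem_Icc (by omega : i + 1 ≤ n + 1)) (div_succ_mem_Icc (by omega : j ≤ n + 1))
    (div_succ_mem_Icc (by omega : j + 1 ≤ n + 1)) (mono i.le_succ) (mono j.le_succ)
  simpa [rectIncr, copulaGrid] using this

theorem copulaGrid_succ_succ (A : ℝ → ℝ → ℝ) (n k m : ℕ) :
    copulaGrid A n (k + 1) (m + 1)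
      = A (((k : ℝ) + 1) / ((n : ℝ) + 1)) (((m : ℝ) + 1) / ((n : ℝ) + 1)) := by
  simp [copulaGrid]

end CopulaGrid

theorem stmt12_general (n : ℕ) (A : ℝ → ℝ → ℝ) (hA : IsCopula A)
    (σ : Equiv.Perm (Fin n)) :
    (∑ k : Fin n, A (((k.val:ℝ)+1)/((n:ℝ)+1)) (((n:ℝ)+1-((k.val:ℝ)+1))/((n:ℝ)+1)))
      ≤ (∑ k : Fin n, A (((k.val:ℝ)+1)/((n:ℝ)+1)) ((((σ k).val:ℝ)+1)/((n:ℝ)+1))) ∧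
    (∑ k : Fin n, A (((k.val:ℝ)+1)/((n:ℝ)+1)) ((((σ k).val:ℝ)+1)/((n:ℝ)+1)))
      ≤ (∑ k : Fin n, A (((k.val:ℝ)+1)/((n:ℝ)+1)) (((k.val:ℝ)+1)/((n:ℝ)+1))) := by
  have rev_succ (k : Fin n) : (n : ℝ) + 1 - ((k : ℝ) + 1) = ((Fin.rev k : ℕ) : ℝ) + 1 := by
    rw [Fin.val_rev, Nat.cast_sub k.isLt]
    push_cast
    ring
  have decomp := sum_apply_succ_eq_sum_survivalCount_smul (n := n) (copulaGrid A n)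
    (fun _ hm => hA.copulaGrid_zero_right (by omega))
    (fun _ hm => hA.copulaGrid_zero_left (by omega))
  have compare {τ τ' : Fin n → Fin n} := sum_survivalCount_smul_le (τ := τ) (τ' := τ')
    fun i hi j hj => hA.rectIncr_copulaGrid_nonneg hi.le hj.le
  simp only [rev_succ, ← copulaGrid_succ_succ, decomp]
  exact ⟨compare fun i j => (survivalCount_rev i j).trans_le (sub_sub_le_survivalCount_perm σ i j),
    compare fun i j => (survivalCount_perm_le σ i j).trans_eq (survivalCount_id i j).symm⟩

theorem stmt12 (n : ℕ) (hn : 1 ≤ n) (A : ℝ → ℝ → ℝ) (hA : IsCopula A)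
    (σ : Equiv.Perm (Fin n)) :
    (∑ k : Fin n, A (((k.val:ℝ)+1)/((n:ℝ)+1)) (((n:ℝ)+1-((k.val:ℝ)+1))/((n:ℝ)+1)))
      ≤ (∑ k : Fin n, A (((k.val:ℝ)+1)/((n:ℝ)+1)) ((((σ k).val:ℝ)+1)/((n:ℝ)+1))) ∧
    (∑ k : Fin n, A (((k.val:ℝ)+1)/((n:ℝ)+1)) ((((σ k).val:ℝ)+1)/((n:ℝ)+1)))
      ≤ (∑ k : Fin n, A (((k.val:ℝ)+1)/((n:ℝ)+1)) (((k.val:ℝ)+1)/((n:ℝ)+1))) :=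
  stmt12_general n A hA σ
end

section
/- Let n ≥ 1, let A be a Γ-invariant bivariate copula, and let μ be a probability measure on [0,1]² whose distribution function is A. If (1/n)Σ_{k=1}^n A(k/(n+1), k/(n+1)) = 1/4, then μ((1/(n+1), n/(n+1)] × (1/(n+1), n/(n+1)]) = 0. -/
open MeasureTheory Set

/-
Write `V(a, b) = A(b,b) - A(b,a) - A(a,b) + A(a,a)` for the `A`-volume of the square `[a,b]²`.
The two symmetries of a Γ-invariant copula give `A(1-a,a) = A(a,1-a) = a - A(a,a)` and
`A(1-a,1-a) = 1 - 2a + A(a,a)`, hence `4 A(a,a) = 4a - 1 + V(a, 1-a)`. Summing over the grid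
points `a = k/(n+1)`, whose sum is `n/2`, gives `4 Σₖ A(aₖ,aₖ) = n + Σₖ V(aₖ, 1-aₖ)`. Every
volume is nonnegative, so the hypothesis forces all of them to vanish; for `a = 1/(n+1)` it is the
`μ`-mass of `(1/(n+1), n/(n+1)]²`.
-/

def squareVolume (C : ℝ → ℝ → ℝ) (a b : ℝ) : ℝ :=
  C b b - C b a - C a b + C a a

theorem IsCopula.squareVolume_nonneg {C : ℝ → ℝ → ℝ} (hC : IsCopula C) {a b : ℝ}
    (ha : a ∈ Icc (0:ℝ) 1) (hb : b ∈ Icc (0:ℝ) 1) : 0 ≤ squareVolume C a b := by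
  unfold squareVolume
  rcases le_total a b with hab | hba
  · exact hC.2.2.2.2.1 a b a b ha hb ha hb hab hab
  · linarith [hC.2.2.2.2.1 b a b a hb ha hb ha hba hba]

theorem IsGammaInvariant.four_mul_diag {C : ℝ → ℝ → ℝ} (hC : IsGammaInvariant C) {a : ℝ}
    (ha : a ∈ Icc (0:ℝ) 1) : 4 * C a a = 4 * a - 1 + squareVolume C a (1 - a) := by
  have ha' : 1 - a ∈ Icc (0:ℝ) 1 := Icc.mem_iff_one_sub_mem.1 ha
  have h₁ := (hC (1 - a) ha' a ha).2
  have h₂ := (hC a ha (1 - a) ha').1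
  have h₃ := (hC (1 - a) ha' (1 - a) ha').2
  rw [sub_sub_cancel] at h₁ h₃
  unfold squareVolume
  linarith

theorem succ_div_succ_mem_Icc {n : ℕ} (k : Fin n) :
    ((k:ℝ) + 1) / ((n:ℝ) + 1) ∈ Icc (0:ℝ) 1 :=
  ⟨by positivity, (div_le_one (by positivity)).2 (by have := k.isLt; norm_cast; omega)⟩

theorem sum_succ_div_succ (n : ℕ) :
    ∑ k : Fin n, ((k:ℝ) + 1) / ((n:ℝ) + 1) = (n:ℝ) / 2 := by
  have h : ∀ m : ℕ, ∑ k ∈ Finset.range m, ((k:ℝ) + 1) = (m:ℝ) * ((m:ℝ) + 1) / 2 := by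
    intro m
    induction m with
    | zero => simp
    | succ m ih => rw [Finset.sum_range_succ, ih]; push_cast; ring
  rw [← Finset.sum_div, Fin.sum_univ_eq_sum_range (fun k => (k:ℝ) + 1), h]
  field_simp

theorem IsGammaInvariant.four_mul_sum_diag {C : ℝ → ℝ → ℝ} (hC : IsGammaInvariant C) (n : ℕ) :
    4 * ∑ k : Fin n, C (((k:ℝ) + 1) / ((n:ℝ) + 1)) (((k:ℝ) + 1) / ((n:ℝ) + 1)) =
      n + ∑ k : Fin n, squareVolume C (((k:ℝ) + 1) / ((n:ℝ) + 1))
        (1 - ((k:ℝ) + 1) / ((n:ℝ) + 1)) := by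
  rw [Finset.mul_sum,
    Finset.sum_congr rfl fun k _ => hC.four_mul_diag (succ_div_succ_mem_Icc k),
    Finset.sum_add_distrib, Finset.sum_sub_distrib, ← Finset.mul_sum, sum_succ_div_succ]
  simp only [Finset.sum_const, Finset.card_univ, Fintype.card_fin, nsmul_eq_mul, mul_one]
  ring

section RectangleMeasure

variable {μ : Measure (ℝ × ℝ)} [IsFiniteMeasure μ] {x₀ a b : ℝ}

theorem measureReal_Icc_prod_eq_add (hx₀ : x₀ ≤ a) (hab : a ≤ b) {t : Set ℝ}
    (ht : MeasurableSet t) :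
    μ.real (Icc x₀ b ×ˢ t) = μ.real (Icc x₀ a ×ˢ t) + μ.real (Ioc a b ×ˢ t) := by
  rw [← Icc_union_Ioc_eq_Icc hx₀ hab, union_prod]
  refine measureReal_union ?_ (measurableSet_Ioc.prod ht)
  exact ((Iic_disjoint_Ioi le_rfl).mono Icc_subset_Iic_self
    Ioc_subset_Ioi_self).set_prod_left _ _

theorem measureReal_prod_Icc_eq_add (hx₀ : x₀ ≤ a) (hab : a ≤ b) {s : Set ℝ}
    (hs : MeasurableSet s) :
    μ.real (s ×ˢ Icc x₀ b) = μ.real (s ×ˢ Icc x₀ a) + μ.real (s ×ˢ Ioc a b) := by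
  rw [← Icc_union_Ioc_eq_Icc hx₀ hab, prod_union]
  refine measureReal_union ?_ (hs.prod measurableSet_Ioc)
  exact ((Iic_disjoint_Ioi le_rfl).mono Icc_subset_Iic_self
    Ioc_subset_Ioi_self).set_prod_right _ _

theorem measureReal_Ioc_prod_Ioc {y₀ c d : ℝ} (hx₀ : x₀ ≤ a) (hab : a ≤ b) (hy₀ : y₀ ≤ c)
    (hcd : c ≤ d) :
    μ.real (Ioc a b ×ˢ Ioc c d) = μ.real (Icc x₀ b ×ˢ Icc y₀ d) - μ.real (Icc x₀ b ×ˢ Icc y₀ c)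
      - μ.real (Icc x₀ a ×ˢ Icc y₀ d) + μ.real (Icc x₀ a ×ˢ Icc y₀ c) := by
  rw [measureReal_Icc_prod_eq_add hx₀ hab measurableSet_Icc,
    measureReal_Icc_prod_eq_add hx₀ hab measurableSet_Icc,
    measureReal_prod_Icc_eq_add hy₀ hcd measurableSet_Ioc]
  ring

end RectangleMeasure

theorem IsDistributionOf.measureReal_Ioc_prod_Ioc_eq_squareVolume {μ : Measure (ℝ × ℝ)}
    [IsFiniteMeasure μ] {A : ℝ → ℝ → ℝ} (hdist : IsDistributionOf μ A) (hA : IsCopula A) {a b : ℝ}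
    (ha : a ∈ Icc (0:ℝ) 1) (hb : b ∈ Icc (0:ℝ) 1) (hab : a ≤ b) :
    μ.real (Ioc a b ×ˢ Ioc a b) = squareVolume A a b := by
  have hbox : ∀ u ∈ Icc (0:ℝ) 1, ∀ v ∈ Icc (0:ℝ) 1, μ.real (Icc 0 u ×ˢ Icc 0 v) = A u v :=
    fun u hu v hv => by
      rw [measureReal_def, hdist u hu v hv, ENNReal.toReal_ofReal (hA.2.2.2.2.2 u hu v hv).1]
  rw [measureReal_Ioc_prod_Ioc ha.1 hab ha.1 hab, hbox b hb b hb, hbox b hb a ha,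
    hbox a ha b hb, hbox a ha a ha]
  rfl

theorem stmt14 (n : ℕ) (hn : 1 ≤ n) (A : ℝ → ℝ → ℝ) (hA : IsCopula A)
    (hinv : IsGammaInvariant A)
    (μ : MeasureTheory.Measure (ℝ × ℝ))
    (hμ : MeasureTheory.IsProbabilityMeasure μ) (hdist : IsDistributionOf μ A)
    (hM : (1/(n:ℝ)) * (∑ k : Fin n,
      A (((k.val:ℝ)+1)/((n:ℝ)+1)) (((k.val:ℝ)+1)/((n:ℝ)+1))) = 1/4) :
    μ (Ioc ((1:ℝ)/((n:ℝ)+1)) ((n:ℝ)/((n:ℝ)+1)) ×ˢ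
        Ioc ((1:ℝ)/((n:ℝ)+1)) ((n:ℝ)/((n:ℝ)+1))) = 0 := by
  have hsum : ∑ k : Fin n, squareVolume A (((k:ℝ) + 1) / ((n:ℝ) + 1))
      (1 - ((k:ℝ) + 1) / ((n:ℝ) + 1)) = 0 := by
    have hn₀ : (n:ℝ) ≠ 0 := by exact_mod_cast Nat.one_le_iff_ne_zero.1 hn
    field_simp at hM
    linarith [hinv.four_mul_sum_diag n]
  have hvol := (Finset.sum_eq_zero_iff_of_nonneg fun k _ =>
    hA.squareVolume_nonneg (succ_div_succ_mem_Icc k)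
      (Icc.mem_iff_one_sub_mem.1 (succ_div_succ_mem_Icc k))).1 hsum ⟨0, hn⟩ (Finset.mem_univ _)
  have ha : (1:ℝ) / ((n:ℝ) + 1) ∈ Icc (0:ℝ) 1 := by
    simpa using succ_div_succ_mem_Icc (⟨0, hn⟩ : Fin n)
  have hab : (1:ℝ) / ((n:ℝ) + 1) ≤ (n:ℝ) / ((n:ℝ) + 1) := by
    gcongr; exact_mod_cast hn
  have hb : (n:ℝ) / ((n:ℝ) + 1) = 1 - 1 / ((n:ℝ) + 1) := by field_simp; ring
  simp only [Nat.cast_zero, zero_add] at hvol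
  rw [← measureReal_eq_zero_iff, hdist.measureReal_Ioc_prod_Ioc_eq_squareVolume hA ha
    (hb ▸ Icc.mem_iff_one_sub_mem.1 ha) hab, hb, hvol]
end

section
/- Let A be a Γ-invariant bivariate copula and let μ be a probability measure on [0,1]² whose distribution function is A. Then there exists n₀ ≥ 2 such that for every n ≥ n₀ one has (1/n)Σ_{k=1}^n A(k/(n+1), k/(n+1)) > 1/4, i.e. ⟨M,A⟩_n > 1/4 for all sufficiently large sample sizes n. -/
open MeasureTheory Set

/-! Write `δ u = A u u`. Since `A` is a copula, `δ` is monotone and satisfies the Fréchet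
bound `δ u ≥ max 0 (2u - 1)`; Γ-invariance gives `δ (1/2) = 1/2 - δ (1/2)`, so `δ ≥ 1/4` on
`[1/2, 1]`.
The grid sums of `max 0 (2u - 1)` at `u = (k+1)/(n+1)` fall short of `n/4` by at most `1/4`,
while at the two grid points just right of `1/2` the bound `δ ≥ 1/4` beats `2u - 1` by almost
`1/4` each, which closes the gap once `n ≥ 24`. -/

namespace IsCopula

variable {C : ℝ → ℝ → ℝ}

theorem monotoneOn_left (hC : IsCopula C) {v : ℝ} (hv : v ∈ Icc (0:ℝ) 1) :
    MonotoneOn (C · v) (Icc 0 1) := by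
  intro u₁ hu₁ u₂ hu₂ h
  have := hC.2.2.2.2.1 u₁ u₂ 0 v hu₁ hu₂ (left_mem_Icc.2 zero_le_one) hv h hv.1
  rw [hC.1 u₁ hu₁, hC.1 u₂ hu₂] at this
  show C u₁ v ≤ C u₂ v
  linarith

theorem monotoneOn_right (hC : IsCopula C) {u : ℝ} (hu : u ∈ Icc (0:ℝ) 1) :
    MonotoneOn (C u) (Icc 0 1) := by
  intro v₁ hv₁ v₂ hv₂ h
  have := hC.2.2.2.2.1 0 u v₁ v₂ (left_mem_Icc.2 zero_le_one) hu hv₁ hv₂ hu.1 h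
  rw [hC.2.1 v₁ hv₁, hC.2.1 v₂ hv₂] at this
  linarith

theorem monotoneOn_diag (hC : IsCopula C) : MonotoneOn (fun u => C u u) (Icc 0 1) :=
  fun _ hu _ hv h => (hC.monotoneOn_left hu hu hv h).trans (hC.monotoneOn_right hv hu hv h)

theorem diag_nonneg (hC : IsCopula C) {u : ℝ} (hu : u ∈ Icc (0:ℝ) 1) : 0 ≤ C u u :=
  (hC.2.2.2.2.2 u hu u hu).1

theorem two_mul_sub_one_le_diag (hC : IsCopula C) {u : ℝ} (hu : u ∈ Icc (0:ℝ) 1) :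
    2 * u - 1 ≤ C u u := by
  have h1 : (1:ℝ) ∈ Icc (0:ℝ) 1 := right_mem_Icc.2 zero_le_one
  have := hC.2.2.2.2.1 u 1 u 1 hu h1 hu h1 hu.2 hu.2
  rw [hC.2.2.1 u hu, hC.2.2.2.1 u hu, hC.2.2.1 1 h1] at this
  linarith

end IsCopula

theorem IsGammaInvariant.apply_half_half_s16 {C : ℝ → ℝ → ℝ} (hC : IsGammaInvariant C) :
    C (1/2) (1/2) = 1/4 := by
  have hhalf : (1/2:ℝ) ∈ Icc (0:ℝ) 1 := ⟨by norm_num, by norm_num⟩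
  have := (hC (1/2) hhalf (1/2) hhalf).2
  norm_num at this
  linarith

-- With truncated subtraction the summand is `max 0 (2k + 1 - n) = (n + 1) · max 0 (2u - 1)`
-- at the grid point `u = (k + 1)/(n + 1)`.
theorem sq_le_four_mul_sum_tsub (n : ℕ) :
    n ^ 2 ≤ 4 * ∑ k ∈ Finset.range n, (2 * k + 1 - n) + 1 := by
  induction n using Nat.twoStepInduction with
  | zero => simp
  | one => simp
  | more n ih _ =>
    have hstep : ∑ k ∈ Finset.range (n + 2), (2 * k + 1 - (n + 2))
        = ∑ k ∈ Finset.range n, (2 * k + 1 - n) + (n + 1) := by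
      rw [Finset.sum_range_succ', Finset.sum_range_succ]
      have hshift : ∀ k, 2 * (k + 1) + 1 - (n + 2) = 2 * k + 1 - n := fun k => by omega
      simp only [hshift]
      omega
    rw [hstep]
    nlinarith [ih]

theorem sub_one_div_four_le_sum_tsub_div (n : ℕ) :
    ((n:ℝ) - 1) / 4 ≤ ∑ k ∈ Finset.range n, ((2 * k + 1 - n : ℕ) : ℝ) / (n + 1) := by
  rw [← Finset.sum_div, ← Nat.cast_sum, le_div_iff₀ (by positivity)]
  have : ((n:ℝ)) ^ 2 ≤ 4 * ((∑ k ∈ Finset.range n, (2 * k + 1 - n) : ℕ) : ℝ) + 1 := by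
    exact_mod_cast sq_le_four_mul_sum_tsub n
  nlinarith

theorem grid_mem_Icc {n k : ℕ} (hk : k < n) : ((k:ℝ) + 1) / (n + 1) ∈ Icc (0:ℝ) 1 :=
  ⟨by positivity,
    (div_le_one (by positivity)).2 (by exact_mod_cast (by omega : k + 1 ≤ n + 1))⟩

section GridSum

variable {δ : ℝ → ℝ}

theorem tsub_div_le_apply_grid (hnonneg : ∀ u ∈ Icc (0:ℝ) 1, 0 ≤ δ u)
    (hfrechet : ∀ u ∈ Icc (0:ℝ) 1, 2 * u - 1 ≤ δ u) {n k : ℕ} (hk : k < n) :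
    ((2 * k + 1 - n : ℕ) : ℝ) / (n + 1) ≤ δ ((k + 1) / (n + 1)) := by
  rcases le_or_gt n (2 * k + 1) with h | h
  · have hlin : ((2 * k + 1 - n : ℕ) : ℝ) / (n + 1) = 2 * ((k + 1) / (n + 1)) - 1 := by
      rw [Nat.cast_sub h]
      field_simp
      push_cast
      ring
    exact hlin ▸ hfrechet _ (grid_mem_Icc hk)
  · rw [Nat.sub_eq_zero_of_le h.le, Nat.cast_zero, zero_div]
    exact hnonneg _ (grid_mem_Icc hk)

theorem quarter_sub_le_apply_grid_sub (hquarter : ∀ u ∈ Icc (1/2:ℝ) 1, 1/4 ≤ δ u)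
    {n k : ℕ} (hk : k < n) (h₁ : n ≤ 2 * k + 1) (h₂ : 2 * k + 1 ≤ n + 3) :
    1/4 - 3 / (n + 1) ≤ δ ((k + 1) / (n + 1)) - ((2 * k + 1 - n : ℕ) : ℝ) / (n + 1) := by
  have hsmall : ((2 * k + 1 - n : ℕ) : ℝ) / (n + 1) ≤ 3 / (n + 1) := by
    gcongr
    exact_mod_cast (by omega : 2 * k + 1 - n ≤ 3)
  have hhalf : 1/2 ≤ ((k:ℝ) + 1) / (n + 1) := by
    rw [le_div_iff₀ (by positivity)]
    have : (n:ℝ) ≤ 2 * k + 1 := by exact_mod_cast h₁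
    linarith
  linarith [hquarter _ ⟨hhalf, (grid_mem_Icc hk).2⟩]

theorem quarter_lt_sum_grid (hnonneg : ∀ u ∈ Icc (0:ℝ) 1, 0 ≤ δ u)
    (hfrechet : ∀ u ∈ Icc (0:ℝ) 1, 2 * u - 1 ≤ δ u)
    (hquarter : ∀ u ∈ Icc (1/2:ℝ) 1, 1/4 ≤ δ u) {n : ℕ} (hn : 24 ≤ n) :
    (n:ℝ) / 4 < ∑ k ∈ Finset.range n, δ ((k + 1) / (n + 1)) := by
  set x : ℕ → ℝ := fun k => ((k:ℝ) + 1) / (n + 1)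
  set ℓ : ℕ → ℝ := fun k => ((2 * k + 1 - n : ℕ) : ℝ) / (n + 1)
  have hpair : ({n / 2, n / 2 + 1} : Finset ℕ) ⊆ Finset.range n := by
    intro k hk
    simp only [Finset.mem_insert, Finset.mem_singleton] at hk
    rw [Finset.mem_range]
    omega
  -- the gaps `δ (x k) - ℓ k` are nonnegative, so it suffices to look at two of them
  have hgaps : 2 * (1/4 - 3 / (n + 1)) ≤ ∑ k ∈ Finset.range n, (δ (x k) - ℓ k) := calc
    2 * (1/4 - 3 / (n + 1)) ≤ ∑ k ∈ {n / 2, n / 2 + 1}, (δ (x k) - ℓ k) := by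
      rw [Finset.sum_pair (by omega)]
      linarith [quarter_sub_le_apply_grid_sub hquarter (n := n) (k := n / 2)
          (by omega) (by omega) (by omega),
        quarter_sub_le_apply_grid_sub hquarter (n := n) (k := n / 2 + 1)
          (by omega) (by omega) (by omega)]
    _ ≤ ∑ k ∈ Finset.range n, (δ (x k) - ℓ k) :=
      Finset.sum_le_sum_of_subset_of_nonneg hpair fun k hk _ =>
        sub_nonneg.2 (tsub_div_le_apply_grid hnonneg hfrechet (Finset.mem_range.1 hk))
  have hsplit : ∑ k ∈ Finset.range n, δ (x k)
      = ∑ k ∈ Finset.range n, ℓ k + ∑ k ∈ Finset.range n, (δ (x k) - ℓ k) := by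
    rw [← Finset.sum_add_distrib]
    simp only [add_sub_cancel]
  have hlin := sub_one_div_four_le_sum_tsub_div n
  have hsmall : 3 / ((n:ℝ) + 1) < 1/8 := by
    have : (24:ℝ) ≤ n := by exact_mod_cast hn
    rw [div_lt_iff₀ (by positivity)]
    linarith
  change (n:ℝ) / 4 < ∑ k ∈ Finset.range n, δ (x k)
  linarith

end GridSum

theorem stmt16_general (A : ℝ → ℝ → ℝ) (hA : IsCopula A) (hinv : IsGammaInvariant A) :
    ∃ n₀ : ℕ, 2 ≤ n₀ ∧ ∀ n : ℕ, n₀ ≤ n →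
      (1/(n:ℝ)) * (∑ k : Fin n,
        A (((k.val:ℝ)+1)/((n:ℝ)+1)) (((k.val:ℝ)+1)/((n:ℝ)+1))) > 1/4 := by
  refine ⟨24, by norm_num, fun n hn => ?_⟩
  have hquarter : ∀ u ∈ Icc (1/2:ℝ) 1, 1/4 ≤ A u u := fun u hu =>
    hinv.apply_half_half_s16 ▸
      hA.monotoneOn_diag ⟨by norm_num, by norm_num⟩ ⟨by linarith [hu.1], hu.2⟩ hu.1
  have hsum := quarter_lt_sum_grid (fun u hu => hA.diag_nonneg hu)
    (fun u hu => hA.two_mul_sub_one_le_diag hu) hquarter hn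
  have hnpos : (0:ℝ) < n := by exact_mod_cast (by omega : 0 < n)
  rw [Fin.sum_univ_eq_sum_range (fun k => A (((k:ℝ)+1)/((n:ℝ)+1)) (((k:ℝ)+1)/((n:ℝ)+1))) n,
    gt_iff_lt, one_div_mul_eq_div, lt_div_iff₀ hnpos]
  linarith

theorem stmt16 (A : ℝ → ℝ → ℝ) (hA : IsCopula A) (hinv : IsGammaInvariant A)
    (μ : MeasureTheory.Measure (ℝ × ℝ))
    (hμ : MeasureTheory.IsProbabilityMeasure μ) (hdist : IsDistributionOf μ A) :
    ∃ n₀ : ℕ, 2 ≤ n₀ ∧ ∀ n : ℕ, n₀ ≤ n →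
      (1/(n:ℝ)) * (∑ k : Fin n,
        A (((k.val:ℝ)+1)/((n:ℝ)+1)) (((k.val:ℝ)+1)/((n:ℝ)+1))) > 1/4 :=
  stmt16_general A hA hinv
end

section
/- Let n ≥ 1, let A be a Γ-invariant bivariate copula with ⟨M,A⟩_n := (1/n)Σ_{k=1}^n A(k/(n+1), k/(n+1)) > 1/4, and let σ be a permutation of {1,…,n}. Define the estimator κ̂ := (⟨C,A⟩_n − 1/4)/(⟨M,A⟩_n − 1/4), where ⟨C,A⟩_n := (1/n)Σ_{k=1}^n A(k/(n+1), σ(k)/(n+1)). Then −1 ≤ κ̂ ≤ 1; moreover κ̂ = 1 when σ is the identity permutation, and κ̂ = −1 when σ(k) = n+1−k for all k. -/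
open MeasureTheory Set

/-!
Put `x k = (k + 1) / (n + 1)`. Since `A` is 2-increasing, `(i, j) ↦ A (x i) (x j)` has increasing
differences, so by the rearrangement inequality (proved by repeatedly swapping the largest moved
point into place) `∑ k, A (x k) (x (σ k))` is maximal at the identity: `⟨C,A⟩_n ≤ ⟨M,A⟩_n`.
Γ-invariance `A u v = v - A (1 - u) v` and `x (rev k) = 1 - x k` turn the sum for `σ` into `n / 2`
minus the sum for `σ ∘ rev`, so `⟨C,A⟩_n ≥ 1/2 - ⟨M,A⟩_n`, with equality when `σ = rev`.
Dividing by `⟨M,A⟩_n - 1/4 > 0` gives the claims.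
-/

open Finset Equiv

section Rearrangement

variable {ι β : Type*} [Fintype ι] [LinearOrder ι] [AddCommMonoid β] [PartialOrder β]
  [IsOrderedAddMonoid β] {f : ι → ι → β}

-- `σ.trans (swap a (σ a))` fixes `a` and agrees with `σ` off `{σ.symm a, a}`.
theorem sum_comp_perm_le_sum_comp_trans_swap
    (hf : ∀ i j k l, i ≤ j → k ≤ l → f i l + f j k ≤ f i k + f j l)
    {σ : Perm ι} {a : ι} (hσa : σ a ≤ a) (hσa' : σ.symm a ≤ a) :
    ∑ i, f i (σ i) ≤ ∑ i, f i ((σ.trans (swap a (σ a))) i) := by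
  classical
  set b := σ.symm a
  have hσb : σ b = a := σ.apply_symm_apply a
  obtain hba | hba := eq_or_ne b a
  · have : σ a = a := hba ▸ hσb
    simp [this]
  have hσa_ne : σ a ≠ a := fun h => hba (σ.injective (hσb.trans h.symm))
  have hrest : ∀ x ∈ (univ.erase a).erase b,
      f x ((σ.trans (swap a (σ a))) x) = f x (σ x) := by
    intro x hx
    obtain ⟨hxb, hxa⟩ : x ≠ b ∧ x ≠ a := by simpa using hx
    rw [trans_apply, swap_apply_of_ne_of_ne (fun h => hxb (σ.injective (h.trans hσb.symm)))
      (σ.injective.ne hxa)]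
  have hb_mem : b ∈ univ.erase a := mem_erase.2 ⟨hba, mem_univ b⟩
  rw [← add_sum_erase _ _ (mem_univ a), ← add_sum_erase _ _ hb_mem,
    ← add_sum_erase _ _ (mem_univ a), ← add_sum_erase _ _ hb_mem, sum_congr rfl hrest]
  simp only [trans_apply, hσb, swap_apply_left, swap_apply_right, ← add_assoc]
  gcongr ?_ + _
  rw [add_comm (f a (σ a)), add_comm (f a a)]
  exact hf b a (σ a) a hσa' hσa

theorem sum_comp_perm_le_sum_diag
    (hf : ∀ i j k l, i ≤ j → k ≤ l → f i l + f j k ≤ f i k + f j l) (σ : Perm ι) :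
    ∑ i, f i (σ i) ≤ ∑ i, f i i := by
  classical
  suffices h : ∀ s : Finset ι, ∀ σ : Perm ι, (∀ x, σ x ≠ x → x ∈ s) →
      ∑ i, f i (σ i) ≤ ∑ i, f i i from h univ σ fun x _ => mem_univ x
  intro s
  induction s using Finset.induction_on_max with
  | empty =>
    intro σ hσ
    obtain rfl : σ = 1 := Equiv.ext fun x => by_contra fun h => by simpa using hσ x h
    rfl
  | insert a s hlt ih =>
    intro σ hσ
    have hle : ∀ x, σ x ≠ x → x ≤ a := fun x hx =>
      (mem_insert.1 (hσ x hx)).elim le_of_eq fun h => (hlt x h).le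
    have hσa : σ a ≤ a := by_contra fun h => h (hle _ fun h' => h (σ.injective h').le)
    have hσa' : σ.symm a ≤ a := by_contra fun h =>
      h (hle _ fun h' => h ((σ.apply_symm_apply a).symm.trans h').symm.le)
    refine (sum_comp_perm_le_sum_comp_trans_swap hf hσa hσa').trans (ih _ fun x hx => ?_)
    have hxa : x ≠ a := by rintro rfl; simp at hx
    have hσx : σ x ≠ x := by
      intro h
      have hxσa : x ≠ σ a := fun h' => hxa (σ.injective (h.trans h'))
      exact hx (by rw [trans_apply, h, swap_apply_of_ne_of_ne hxa hxσa])
    exact (mem_insert.1 (hσ x hσx)).resolve_left hxa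

end Rearrangement

section Ranks

variable {n : ℕ}

/-- `Fin n` is 0-indexed, so `k : Fin n` stands for the rank `k + 1`. -/
noncomputable def normalizedRank (n : ℕ) (k : Fin n) : ℝ := ((k.val : ℝ) + 1) / ((n : ℝ) + 1)

theorem normalizedRank_mem_Icc (k : Fin n) : normalizedRank n k ∈ Icc (0 : ℝ) 1 := by
  have hk : (k.val : ℝ) + 1 ≤ n := by exact_mod_cast k.isLt
  refine ⟨by unfold normalizedRank; positivity, ?_⟩
  rw [normalizedRank, div_le_one (by positivity)]
  linarith

theorem monotone_normalizedRank : Monotone (normalizedRank n) := fun i j hij => by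
  unfold normalizedRank
  gcongr
  exact_mod_cast hij

theorem normalizedRank_rev (k : Fin n) : normalizedRank n k.rev = 1 - normalizedRank n k := by
  have hk : k.val + 1 ≤ n := k.isLt
  rw [normalizedRank, normalizedRank, Fin.val_rev, Nat.cast_sub hk]
  field_simp
  push_cast
  ring

end Ranks

theorem sum_eq_card_div_two_of_comp_perm_eq_one_sub {ι : Type*} [Fintype ι] {x : ι → ℝ}
    (r : Perm ι) (hr : ∀ i, x (r i) = 1 - x i) : ∑ i, x i = Fintype.card ι / 2 := by
  have h := Equiv.sum_comp r x
  simp only [hr, sum_sub_distrib, sum_const, card_univ, nsmul_eq_mul, mul_one] at h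
  linarith

theorem IsCopula.sum_comp_perm_le_sum_diag {ι : Type*} [Fintype ι] [LinearOrder ι]
    {A : ℝ → ℝ → ℝ} (hA : IsCopula A) {x : ι → ℝ} (hx : Monotone x)
    (hx01 : ∀ i, x i ∈ Icc (0 : ℝ) 1) (σ : Perm ι) :
    ∑ i, A (x i) (x (σ i)) ≤ ∑ i, A (x i) (x i) := by
  refine _root_.sum_comp_perm_le_sum_diag (f := fun i j => A (x i) (x j))
    (fun i j k l hij hkl => ?_) σ
  have := hA.2.2.2.2.1 _ _ _ _ (hx01 i) (hx01 j) (hx01 k) (hx01 l) (hx hij) (hx hkl)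
  linarith

theorem IsGammaInvariant.sum_comp_perm_eq {ι : Type*} [Fintype ι] {A : ℝ → ℝ → ℝ}
    (hA : IsGammaInvariant A) {x : ι → ℝ} (hx01 : ∀ i, x i ∈ Icc (0 : ℝ) 1) (r : Perm ι)
    (hr : ∀ i, x (r i) = 1 - x i) (σ : Perm ι) :
    ∑ i, A (x i) (x (σ i)) = ∑ i, x i - ∑ i, A (x i) (x (σ (r.symm i))) := by
  have hreflect : ∀ i, A (x i) (x (σ i)) = x (σ i) - A (x (r i)) (x (σ i)) := fun i => by
    rw [hr]
    exact (hA _ (hx01 i) _ (hx01 (σ i))).2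
  rw [sum_congr rfl fun i _ => hreflect i, sum_sub_distrib, Equiv.sum_comp σ x,
    ← Equiv.sum_comp r fun i => A (x i) (x (σ (r.symm i)))]
  simp

theorem IsGammaInvariant.sum_normalizedRank_comp_perm_eq {n : ℕ} {A : ℝ → ℝ → ℝ}
    (hA : IsGammaInvariant A) (σ : Perm (Fin n)) :
    ∑ k, A (normalizedRank n k) (normalizedRank n (σ k)) =
      n / 2 - ∑ k, A (normalizedRank n k) (normalizedRank n (σ k.rev)) := by
  have hr : ∀ k, normalizedRank n (Fin.revPerm k) = 1 - normalizedRank n k := normalizedRank_rev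
  rw [hA.sum_comp_perm_eq normalizedRank_mem_Icc Fin.revPerm hr σ,
    sum_eq_card_div_two_of_comp_perm_eq_one_sub Fin.revPerm hr, Fintype.card_fin]
  simp

theorem stmt17 (n : ℕ) (hn : 1 ≤ n) (A : ℝ → ℝ → ℝ) (hA : IsCopula A)
    (hinv : IsGammaInvariant A) (σ : Equiv.Perm (Fin n))
    (MA CA κ : ℝ)
    (hMA : MA = (1/(n:ℝ)) * ∑ k : Fin n,
      A (((k.val:ℝ)+1)/((n:ℝ)+1)) (((k.val:ℝ)+1)/((n:ℝ)+1)))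
    (hCA : CA = (1/(n:ℝ)) * ∑ k : Fin n,
      A (((k.val:ℝ)+1)/((n:ℝ)+1)) ((((σ k).val:ℝ)+1)/((n:ℝ)+1)))
    (hM : MA > 1/4)
    (hκ : κ = (CA - 1/4) / (MA - 1/4)) :
    (-1 ≤ κ ∧ κ ≤ 1) ∧
    (σ = Equiv.refl (Fin n) → κ = 1) ∧
    ((∀ k : Fin n, (σ k).val + 1 = n - k.val) → κ = -1) := by
  set x := normalizedRank n
  set D := ∑ k, A (x k) (x k)
  set S := ∑ k, A (x k) (x (σ k))
  have hn0 : (n : ℝ) ≠ 0 := Nat.cast_ne_zero.2 (by omega)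
  have hMA' : MA = D / n := by rw [hMA, one_div_mul_eq_div]; rfl
  have hCA' : CA = S / n := by rw [hCA, one_div_mul_eq_div]; rfl
  have hS : S = n / 2 - ∑ k, A (x k) (x (σ k.rev)) := hinv.sum_normalizedRank_comp_perm_eq σ
  have hhalf : 1 / 2 - MA = (n / 2 - D) / n := by rw [hMA']; field_simp
  have hupper : CA ≤ MA := by
    rw [hCA', hMA']
    gcongr
    exact hA.sum_comp_perm_le_sum_diag monotone_normalizedRank normalizedRank_mem_Icc σ
  have hlower : 1 / 2 - MA ≤ CA := by
    rw [hCA', hS, hhalf]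
    gcongr
    exact hA.sum_comp_perm_le_sum_diag monotone_normalizedRank normalizedRank_mem_Icc
      (Fin.revPerm.trans σ)
  have hd : 0 < MA - 1 / 4 := by linarith
  refine ⟨⟨?_, ?_⟩, fun hid => ?_, fun hanti => ?_⟩
  · rw [hκ, le_div_iff₀ hd]; linarith
  · rw [hκ, div_le_one hd]; linarith
  · have hid' : CA = MA := by rw [hCA, hMA, hid]; rfl
    rw [hκ, hid', div_self hd.ne']
  · have hσ : σ = Fin.revPerm := Equiv.ext fun k => Fin.ext <| by
      rw [Fin.revPerm_apply, Fin.val_rev]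
      have := hanti k
      omega
    have hanti' : CA = 1 / 2 - MA := by
      rw [hCA', hS, hhalf, hσ]
      simp [D]
    rw [hκ, hanti', show 1 / 2 - MA - 1 / 4 = -(MA - 1 / 4) by ring, neg_div, div_self hd.ne']
end

section
/- Define E : [0,1]² → [0,1] by E(u,v) := min(u,v) if |u − v| > 1/2, E(u,v) := max(u+v−1, 0) if |u + v − 1| > 1/2, and E(u,v) := (u+v)/2 − 1/4 otherwise. Then E is a copula, E is Γ-invariant (E(u,v) = E(v,u) and E(u,v) = v − E(1−u,v) for all u,v ∈ [0,1]), and (1/3)(E(1/4,1/4) + E(2/4,2/4) + E(3/4,3/4)) = 1/4, i.e. ⟨M,E⟩_3 = 1/4. -/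
open MeasureTheory Set

/-! `E` spreads mass `1/4` uniformly along each side of the square with vertices `(1/2, 0)`,
`(1, 1/2)`, `(1/2, 1)`, `(0, 1/2)`. So on `[0,1]²` it is half the sum of four functions
`M (f u, g v)` or `W_c (f u, g v)` with `f`, `g` monotone, `M = min` and
`W_c (a, b) = max (a + b - c) 0`, each of which is 2-increasing. The boundary conditions and
Γ-invariance are case checks on the three regions of the definition. -/

def IsTwoIncreasing (C : ℝ → ℝ → ℝ) : Prop :=
  ∀ ⦃u₁ u₂ v₁ v₂ : ℝ⦄, u₁ ≤ u₂ → v₁ ≤ v₂ → 0 ≤ C u₂ v₂ - C u₂ v₁ - C u₁ v₂ + C u₁ v₁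

namespace IsTwoIncreasing

variable {C D : ℝ → ℝ → ℝ}

lemma comp (hC : IsTwoIncreasing C) {f g : ℝ → ℝ} (hf : Monotone f) (hg : Monotone g) :
    IsTwoIncreasing fun u v => C (f u) (g v) :=
  fun _ _ _ _ hu hv => hC (hf hu) (hg hv)

lemma add (hC : IsTwoIncreasing C) (hD : IsTwoIncreasing D) :
    IsTwoIncreasing fun u v => C u v + D u v := by
  intro u₁ u₂ v₁ v₂ hu hv
  linarith [hC hu hv, hD hu hv]

lemma const_mul (hC : IsTwoIncreasing C) {c : ℝ} (hc : 0 ≤ c) :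
    IsTwoIncreasing fun u v => c * C u v := by
  intro u₁ u₂ v₁ v₂ hu hv
  nlinarith [hC hu hv]

end IsTwoIncreasing

lemma isTwoIncreasing_min : IsTwoIncreasing min := by
  intro u₁ u₂ v₁ v₂ hu hv
  simp only [min_def]
  split_ifs <;> linarith

lemma isTwoIncreasing_max_add_sub (c : ℝ) : IsTwoIncreasing fun a b => max (a + b - c) 0 := by
  intro u₁ u₂ v₁ v₂ hu hv
  simp only [max_def]
  split_ifs <;> linarith

lemma mem_Icc_of_grounded_of_twoIncreasing {C : ℝ → ℝ → ℝ}
    (hC₀ : ∀ u ∈ Icc (0:ℝ) 1, C u 0 = 0) (hC₀' : ∀ v ∈ Icc (0:ℝ) 1, C 0 v = 0)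
    (hC₁ : ∀ u ∈ Icc (0:ℝ) 1, C u 1 = u)
    (hC : ∀ u₁ u₂ v₁ v₂ : ℝ, u₁ ∈ Icc (0:ℝ) 1 → u₂ ∈ Icc (0:ℝ) 1 → v₁ ∈ Icc (0:ℝ) 1 →
      v₂ ∈ Icc (0:ℝ) 1 → u₁ ≤ u₂ → v₁ ≤ v₂ → 0 ≤ C u₂ v₂ - C u₂ v₁ - C u₁ v₂ + C u₁ v₁)
    {u v : ℝ} (hu : u ∈ Icc (0:ℝ) 1) (hv : v ∈ Icc (0:ℝ) 1) : C u v ∈ Icc (0:ℝ) 1 := by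
  have h₀ : (0:ℝ) ∈ Icc (0:ℝ) 1 := left_mem_Icc.mpr zero_le_one
  have h₁ : (1:ℝ) ∈ Icc (0:ℝ) 1 := right_mem_Icc.mpr zero_le_one
  have lower := hC 0 u 0 v h₀ hu h₀ hv hu.1 hv.1
  have upper := hC 0 u v 1 h₀ hu hv h₁ hu.1 hv.2
  rw [hC₀ u hu, hC₀' v hv, hC₀ 0 h₀] at lower
  rw [hC₁ u hu, hC₀' v hv, hC₀' 1 h₁] at upper
  exact ⟨by linarith, by linarith [hu.2]⟩

noncomputable def diamondCopula (u v : ℝ) : ℝ :=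
  if |u - v| > 1/2 then min u v
  else if |u + v - 1| > 1/2 then max (u + v - 1) 0
  else (u + v)/2 - 1/4

/-- The summands carry the mass on the sides `v = u - 1/2`, `u = v - 1/2`, `u + v = 1/2` and
`u + v = 3/2` of the square, respectively. -/
noncomputable def diamondSum (u v : ℝ) : ℝ :=
  (1/2) * (min (max (u - 1/2) 0) v + min u (max (v - 1/2) 0)
    + max (min u (1/2) + min v (1/2) - 1/2) 0 + max (u + v - 3/2) 0)

lemma isTwoIncreasing_diamondSum : IsTwoIncreasing diamondSum := by
  have hr : Monotone fun u : ℝ => max (u - 1/2) 0 :=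
    fun _ _ h => max_le_max (by linarith) le_rfl
  have hq : Monotone fun u : ℝ => min u (1/2) := fun _ _ h => min_le_min h le_rfl
  exact ((((isTwoIncreasing_min.comp hr monotone_id).add
    (isTwoIncreasing_min.comp monotone_id hr)).add
    ((isTwoIncreasing_max_add_sub _).comp hq hq)).add
    (isTwoIncreasing_max_add_sub _)).const_mul (by norm_num)

lemma diamondCopula_eq_diamondSum {u v : ℝ} (hu : u ∈ Icc (0:ℝ) 1) (hv : v ∈ Icc (0:ℝ) 1) :
    diamondCopula u v = diamondSum u v := by
  grind [diamondCopula, diamondSum]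

lemma diamondCopula_comm (u v : ℝ) : diamondCopula u v = diamondCopula v u := by
  rw [diamondCopula, diamondCopula, abs_sub_comm, min_comm, add_comm v u]

lemma diamondCopula_one_sub_left {u v : ℝ} (hu : u ∈ Icc (0:ℝ) 1) (hv : v ∈ Icc (0:ℝ) 1) :
    diamondCopula (1 - u) v = v - diamondCopula u v := by
  grind [diamondCopula]

lemma diamondCopula_zero_right {u : ℝ} (hu : u ∈ Icc (0:ℝ) 1) : diamondCopula u 0 = 0 := by
  grind [diamondCopula]

lemma diamondCopula_one_right {u : ℝ} (hu : u ∈ Icc (0:ℝ) 1) : diamondCopula u 1 = u := by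
  grind [diamondCopula]

lemma isCopula_diamondCopula : IsCopula diamondCopula := by
  have hC₀ : ∀ u ∈ Icc (0:ℝ) 1, diamondCopula u 0 = 0 := fun _ => diamondCopula_zero_right
  have hC₀' : ∀ v ∈ Icc (0:ℝ) 1, diamondCopula 0 v = 0 := fun v hv => by
    rw [diamondCopula_comm, diamondCopula_zero_right hv]
  have hC₁ : ∀ u ∈ Icc (0:ℝ) 1, diamondCopula u 1 = u := fun _ => diamondCopula_one_right
  have hC₁' : ∀ v ∈ Icc (0:ℝ) 1, diamondCopula 1 v = v := fun v hv => by
    rw [diamondCopula_comm, diamondCopula_one_right hv]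
  have hC : ∀ u₁ u₂ v₁ v₂ : ℝ, u₁ ∈ Icc (0:ℝ) 1 → u₂ ∈ Icc (0:ℝ) 1 → v₁ ∈ Icc (0:ℝ) 1 →
      v₂ ∈ Icc (0:ℝ) 1 → u₁ ≤ u₂ → v₁ ≤ v₂ →
      0 ≤ diamondCopula u₂ v₂ - diamondCopula u₂ v₁ - diamondCopula u₁ v₂ + diamondCopula u₁ v₁ := by
    intro u₁ u₂ v₁ v₂ hu₁ hu₂ hv₁ hv₂ hu hv
    rw [diamondCopula_eq_diamondSum hu₂ hv₂, diamondCopula_eq_diamondSum hu₂ hv₁,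
      diamondCopula_eq_diamondSum hu₁ hv₂, diamondCopula_eq_diamondSum hu₁ hv₁]
    exact isTwoIncreasing_diamondSum hu hv
  exact ⟨hC₀, hC₀', hC₁, hC₁', hC,
    fun u hu v hv => mem_Icc_of_grounded_of_twoIncreasing hC₀ hC₀' hC₁ hC hu hv⟩

lemma isGammaInvariant_diamondCopula : IsGammaInvariant diamondCopula := fun u hu v hv =>
  ⟨diamondCopula_comm u v, by rw [diamondCopula_one_sub_left hu hv, sub_sub_cancel]⟩

theorem stmt18 (E : ℝ → ℝ → ℝ)
    (hE : ∀ u v : ℝ, E u v =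
      if |u - v| > 1/2 then min u v
      else if |u + v - 1| > 1/2 then max (u + v - 1) 0
      else (u + v)/2 - 1/4) :
    IsCopula E ∧ IsGammaInvariant E ∧
    (1/3) * (E (1/4) (1/4) + E (2/4) (2/4) + E (3/4) (3/4)) = 1/4 := by
  obtain rfl : E = diamondCopula := funext₂ hE
  refine ⟨isCopula_diamondCopula, isGammaInvariant_diamondCopula, ?_⟩
  norm_num [diamondCopula, abs_of_nonneg, abs_of_nonpos]
end

section
/- Let f : ℝ² → [0,∞) be a measurable function with ∫_{ℝ²} f dλ² = 1 and f(x₁,x₂) = f(|x₁|,|x₂|) for all (x₁,x₂) ∈ ℝ². Define F(x₁,x₂) := ∫_{(−∞,x₁]×(−∞,x₂]} f dλ², F₁(x₁) := ∫_{(−∞,x₁]×ℝ} f dλ², F₂(x₂) := ∫_{ℝ×(−∞,x₂]} f dλ². Let C be a copula such that C(F₁(x₁), F₂(x₂)) = F(x₁,x₂) for all (x₁,x₂) ∈ ℝ², and assume F₁ and F₂ are surjective onto [0,1]. Then C is Γ^ν-invariant: C(u,v) = v − C(1−u, v) and C(u,v) = u − C(u, 1−v) for all u,v ∈ [0,1].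 -/
open MeasureTheory Set

/-!
Since `f` is even in each coordinate, reflecting `x₁ ↦ -x₁` maps the mass of
`(-∞, -x₁] × B` onto that of `[x₁, ∞) × B`, which (lines being null) is the mass of
`ℝ × B` minus that of `(-∞, x₁] × B`. Hence `F₁(-x₁) = 1 - F₁(x₁)` and
`F(-x₁, x₂) = F₂(x₂) - F(x₁, x₂)`, and similarly in the second coordinate. Writing
`u = F₁(x₁)`, `v = F₂(x₂)` by surjectivity turns these into the two reflection identities
for `C`.
-/

section Reflection

variable {E : Type*} [NormedAddCommGroup E] [NormedSpace ℝ E]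
  {μ ν : Measure ℝ} [SFinite μ] [SFinite ν]

theorem setIntegral_Iic_neg_prod [NullSingletonClass μ] [μ.IsNegInvariant] {f : ℝ × ℝ → E}
    (hf : Integrable f (μ.prod ν)) (heven : ∀ p : ℝ × ℝ, f (-p.1, p.2) = f p)
    (a : ℝ) {s : Set ℝ} (hs : MeasurableSet s) :
    ∫ p in Iic (-a) ×ˢ s, f p ∂μ.prod ν =
      (∫ p in univ ×ˢ s, f p ∂μ.prod ν) - ∫ p in Iic a ×ˢ s, f p ∂μ.prod ν := by
  have hreflect : MeasurePreserving (fun p : ℝ × ℝ => (-p.1, p.2)) (μ.prod ν) (μ.prod ν) :=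
    (Measure.measurePreserving_neg μ).prod (MeasurePreserving.id ν)
  have hemb : MeasurableEmbedding (fun p : ℝ × ℝ => (-p.1, p.2)) :=
    (MeasurableEquiv.prodCongr (MeasurableEquiv.neg ℝ) (MeasurableEquiv.refl ℝ)).measurableEmbedding
  have hpre : (fun p : ℝ × ℝ => (-p.1, p.2)) ⁻¹' (Iic (-a) ×ˢ s) = Ici a ×ˢ s := by
    ext p
    simp
  have hsplit : ∫ p in univ ×ˢ s, f p ∂μ.prod ν =
      (∫ p in Iic a ×ˢ s, f p ∂μ.prod ν) + ∫ p in Ioi a ×ˢ s, f p ∂μ.prod ν := by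
    rw [← setIntegral_union (disjoint_prod.2 (.inl (Iic_disjoint_Ioi le_rfl)))
      (measurableSet_Ioi.prod hs) hf.integrableOn hf.integrableOn, ← union_prod, Iic_union_Ioi]
  calc ∫ p in Iic (-a) ×ˢ s, f p ∂μ.prod ν
      = ∫ p in Ici a ×ˢ s, f p ∂μ.prod ν := by
        rw [← hreflect.setIntegral_preimage_emb hemb, hpre]
        simp only [heven]
    _ = ∫ p in Ioi a ×ˢ s, f p ∂μ.prod ν :=
        setIntegral_congr_set (Measure.set_prod_ae_eq Ioi_ae_eq_Ici.symm .rfl)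
    _ = _ := by rw [hsplit]; abel

theorem setIntegral_prod_Iic_neg [NullSingletonClass ν] [ν.IsNegInvariant] {f : ℝ × ℝ → E}
    (hf : Integrable f (μ.prod ν)) (heven : ∀ p : ℝ × ℝ, f (p.1, -p.2) = f p)
    (a : ℝ) {s : Set ℝ} (hs : MeasurableSet s) :
    ∫ p in s ×ˢ Iic (-a), f p ∂μ.prod ν =
      (∫ p in s ×ˢ univ, f p ∂μ.prod ν) - ∫ p in s ×ˢ Iic a, f p ∂μ.prod ν := by
  rw [← setIntegral_prod_swap s (Iic (-a)), ← setIntegral_prod_swap s univ,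
    ← setIntegral_prod_swap s (Iic a)]
  exact setIntegral_Iic_neg_prod hf.swap (fun p => heven p.swap) a hs

end Reflection

theorem stmt19_general (f : ℝ × ℝ → ℝ)
    (hf1 : (∫ p, f p) = 1)
    (hsym : ∀ x₁ x₂ : ℝ, f (x₁, x₂) = f (|x₁|, |x₂|))
    (C : ℝ → ℝ → ℝ)
    (F : ℝ → ℝ → ℝ) (hF : ∀ x₁ x₂ : ℝ, F x₁ x₂ = ∫ p in Iic x₁ ×ˢ Iic x₂, f p)
    (F₁ : ℝ → ℝ) (hF₁ : ∀ x₁ : ℝ, F₁ x₁ = ∫ p in Iic x₁ ×ˢ (univ : Set ℝ), f p)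
    (F₂ : ℝ → ℝ) (hF₂ : ∀ x₂ : ℝ, F₂ x₂ = ∫ p in (univ : Set ℝ) ×ˢ Iic x₂, f p)
    (hCF : ∀ x₁ x₂ : ℝ, C (F₁ x₁) (F₂ x₂) = F x₁ x₂)
    (hsurj1 : ∀ u ∈ Icc (0:ℝ) 1, ∃ x, F₁ x = u)
    (hsurj2 : ∀ v ∈ Icc (0:ℝ) 1, ∃ x, F₂ x = v) :
    ∀ u ∈ Icc (0:ℝ) 1, ∀ v ∈ Icc (0:ℝ) 1,
      C u v = v - C (1 - u) v ∧ C u v = u - C u (1 - v) := by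
  have hfi : Integrable f := Integrable.of_integral_ne_zero (by simp [hf1])
  rw [Measure.volume_eq_prod] at hfi hf1 hF hF₁ hF₂
  have hneg₁ : ∀ p : ℝ × ℝ, f (-p.1, p.2) = f p := fun p => by rw [hsym, abs_neg, ← hsym]
  have hneg₂ : ∀ p : ℝ × ℝ, f (p.1, -p.2) = f p := fun p => by rw [hsym, abs_neg, ← hsym]
  have htotal : ∫ p in univ ×ˢ univ, f p ∂(volume.prod volume) = 1 := by
    rw [univ_prod_univ, setIntegral_univ, hf1]
  have hF₁_neg (x : ℝ) : F₁ (-x) = 1 - F₁ x := by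
    rw [hF₁, hF₁, setIntegral_Iic_neg_prod hfi hneg₁ x .univ, htotal]
  have hF₂_neg (x : ℝ) : F₂ (-x) = 1 - F₂ x := by
    rw [hF₂, hF₂, setIntegral_prod_Iic_neg hfi hneg₂ x .univ, htotal]
  have hF_neg₁ (x₁ x₂ : ℝ) : F (-x₁) x₂ = F₂ x₂ - F x₁ x₂ := by
    rw [hF, hF, setIntegral_Iic_neg_prod hfi hneg₁ x₁ measurableSet_Iic, hF₂]
  have hF_neg₂ (x₁ x₂ : ℝ) : F x₁ (-x₂) = F₁ x₁ - F x₁ x₂ := by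
    rw [hF, hF, setIntegral_prod_Iic_neg hfi hneg₂ x₂ measurableSet_Iic, hF₁]
  intro u hu v hv
  obtain ⟨x₁, rfl⟩ := hsurj1 u hu
  obtain ⟨x₂, rfl⟩ := hsurj2 v hv
  constructor
  · rw [← hF₁_neg, hCF, hCF, hF_neg₁]; ring
  · rw [← hF₂_neg, hCF, hCF, hF_neg₂]; ring

theorem stmt19 (f : ℝ × ℝ → ℝ) (hf : Measurable f) (hf0 : ∀ p, 0 ≤ f p)
    (hf1 : (∫ p, f p) = 1)
    (hsym : ∀ x₁ x₂ : ℝ, f (x₁, x₂) = f (|x₁|, |x₂|))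
    (C : ℝ → ℝ → ℝ) (hC : IsCopula C)
    (F : ℝ → ℝ → ℝ) (hF : ∀ x₁ x₂ : ℝ, F x₁ x₂ = ∫ p in Iic x₁ ×ˢ Iic x₂, f p)
    (F₁ : ℝ → ℝ) (hF₁ : ∀ x₁ : ℝ, F₁ x₁ = ∫ p in Iic x₁ ×ˢ (univ : Set ℝ), f p)
    (F₂ : ℝ → ℝ) (hF₂ : ∀ x₂ : ℝ, F₂ x₂ = ∫ p in (univ : Set ℝ) ×ˢ Iic x₂, f p)
    (hCF : ∀ x₁ x₂ : ℝ, C (F₁ x₁) (F₂ x₂) = F x₁ x₂)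
    (hsurj1 : ∀ u ∈ Icc (0:ℝ) 1, ∃ x, F₁ x = u)
    (hsurj2 : ∀ v ∈ Icc (0:ℝ) 1, ∃ x, F₂ x = v) :
    ∀ u ∈ Icc (0:ℝ) 1, ∀ v ∈ Icc (0:ℝ) 1,
      C u v = v - C (1 - u) v ∧ C u v = u - C u (1 - v) :=
  stmt19_general f hf1 hsym C F hF F₁ hF₁ F₂ hF₂ hCF hsurj1 hsurj2
end
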